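/- arXiv:2509.07391 — 13 statements merged into one kernel-verified Lean document; each statement's English description precedes it below -/
import Mathlib

section
/- Let α, κ ≥ 0. For λ₁(h,b) = αhb + κh²/3, λ₂(h,b) = 3αhb + κh², r₁(h,b) = (−3αh, 3αb + 2κh), r₂(h,b) = (h,b) and w₂(h,b) = b/h the following hold: (i) for all (h,b) ∈ ℝ², the gradient ∇λ₁(h,b) = (αb + 2κh/3, αh) satisfies ∇λ₁(h,b)·r₁(h,b) = 0, so the first characteristic field is linearly degenerate; (ii) for all h ≠ 0, the gradient ∇w₂(h,b) = (−b/h², 1/h) satisfies ∇w₂(h,b)·r₂(h,b) = 0; (iii) for all (h,b), ∇λ₂(h,b)·r₂(h,b) = 6αhb + 2κh², which is strictly positive whenever h > 0, b > 0 and α + κ > 0, so the second characteristic field is genuinely nonlinear on the open quadrant. -/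
/-- Characteristic fields of the thin-film system with gravity:
(i) the first field is linearly degenerate: `∇λ₁(h,b)·r₁(h,b) = 0` with
`∇λ₁ = (αb + 2κh/3, αh)` and `r₁ = (−3αh, 3αb + 2κh)`;
(ii) for `h ≠ 0`, `∇w₂(h,b)·r₂(h,b) = 0` with `∇w₂ = (−b/h², 1/h)` and
`r₂ = (h,b)`;
(iii) `∇λ₂(h,b)·r₂(h,b) = 6αhb + 2κh²` with `∇λ₂ = (3αb + 2κh, 3αh)`, which
is strictly positive whenever `h > 0`, `b > 0` and `α + κ > 0`, so the second
field is genuinely nonlinear on the open quadrant. -/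
theorem thin_film_characteristic_fields (α κ : ℝ) (hα : 0 ≤ α) (hκ : 0 ≤ κ) :
    (∀ h b : ℝ,
      (α*b + 2*κ*h/3) * (-3*α*h) + (α*h) * (3*α*b + 2*κ*h) = 0) ∧
    (∀ h b : ℝ, h ≠ 0 → (-b/h^2) * h + (1/h) * b = 0) ∧
    (∀ h b : ℝ,
      (3*α*b + 2*κ*h) * h + (3*α*h) * b = 6*α*h*b + 2*κ*h^2 ∧
      (0 < h → 0 < b → 0 < α + κ → 0 < 6*α*h*b + 2*κ*h^2)) := by
  refine ⟨fun h b => by ring, fun h b hh => by field_simp; ring, fun h b => ⟨by ring, ?_⟩⟩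
  intro hh hb hακ
  rcases lt_or_eq_of_le hα with ha | ha
  · nlinarith [mul_pos (mul_pos ha hh) hb, mul_nonneg hκ (sq_nonneg h)]
  · nlinarith [mul_pos (mul_pos (show (0:ℝ) < κ by linarith) hh) hh, mul_nonneg (mul_nonneg hα hh.le) hb.le]
end

section
/- Let α, κ ≥ 0 and let h, b : ℝ × ℝ → ℝ be differentiable functions of (x,t) with h(x,t) > 0 for all (x,t), satisfying pointwise the system ∂ₜh + ∂ₓ(αh²b + κh³/3) = 0 and ∂ₜb + ∂ₓ(αhb² + κh²b/3) = 0. Then the Riemann invariants w₁ := αhb + κh²/3 and w₂ := b/h satisfy the diagonal system ∂ₜw₁ + 3w₁ ∂ₓw₁ = 0 and ∂ₜw₂ + w₁ ∂ₓw₂ = 0 pointwise. -/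
/-- For differentiable positive solutions of the thin-film system with gravity
`∂ₜh + ∂ₓ(αh²b + κh³/3) = 0`, `∂ₜb + ∂ₓ(αhb² + κh²b/3) = 0`, the Riemann
invariants `w₁ = αhb + κh²/3` and `w₂ = b/h` satisfy the diagonal system
`∂ₜw₁ + 3w₁∂ₓw₁ = 0` and `∂ₜw₂ + w₁∂ₓw₂ = 0` pointwise. -/
theorem thin_film_riemann_invariants_diagonal_system
    (α κ : ℝ) (hα : 0 ≤ α) (hκ : 0 ≤ κ)
    (h b : ℝ × ℝ → ℝ)
    (hh : Differentiable ℝ h) (hb : Differentiable ℝ b)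
    (hpos : ∀ x t : ℝ, 0 < h (x, t))
    (pde1 : ∀ x t : ℝ,
      deriv (fun s => h (x, s)) t
        + deriv (fun y => α * (h (y, t))^2 * b (y, t) + κ * (h (y, t))^3 / 3) x = 0)
    (pde2 : ∀ x t : ℝ,
      deriv (fun s => b (x, s)) t
        + deriv (fun y => α * h (y, t) * (b (y, t))^2 + κ * (h (y, t))^2 * b (y, t) / 3) x = 0) :
    ∀ x t : ℝ,
      deriv (fun s => α * h (x, s) * b (x, s) + κ * (h (x, s))^2 / 3) t
        + 3 * (α * h (x, t) * b (x, t) + κ * (h (x, t))^2 / 3)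
          * deriv (fun y => α * h (y, t) * b (y, t) + κ * (h (y, t))^2 / 3) x = 0 ∧
      deriv (fun s => b (x, s) / h (x, s)) t
        + (α * h (x, t) * b (x, t) + κ * (h (x, t))^2 / 3)
          * deriv (fun y => b (y, t) / h (y, t)) x = 0 := by
  intro x t
  have hA : h (x, t) ≠ 0 := ne_of_gt (hpos x t)
  -- partial derivatives as HasDerivAt facts
  have hdx : Differentiable ℝ (fun y : ℝ => h (y, t)) :=
    hh.comp (differentiable_id.prodMk (differentiable_const t))
  have bdx : Differentiable ℝ (fun y : ℝ => b (y, t)) :=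
    hb.comp (differentiable_id.prodMk (differentiable_const t))
  have hdt : Differentiable ℝ (fun s : ℝ => h (x, s)) :=
    hh.comp ((differentiable_const x).prodMk differentiable_id)
  have bdt : Differentiable ℝ (fun s : ℝ => b (x, s)) :=
    hb.comp ((differentiable_const x).prodMk differentiable_id)
  set A := h (x, t) with hAdef
  set B := b (x, t) with hBdef
  set Hx := deriv (fun y : ℝ => h (y, t)) x with hHx
  set Bx := deriv (fun y : ℝ => b (y, t)) x with hBx
  set Ht := deriv (fun s : ℝ => h (x, s)) t with hHt
  set Bt := deriv (fun s : ℝ => b (x, s)) t with hBt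
  have Hxd : HasDerivAt (fun y : ℝ => h (y, t)) Hx x := (hdx x).hasDerivAt
  have Bxd : HasDerivAt (fun y : ℝ => b (y, t)) Bx x := (bdx x).hasDerivAt
  have Htd : HasDerivAt (fun s : ℝ => h (x, s)) Ht t := (hdt t).hasDerivAt
  have Btd : HasDerivAt (fun s : ℝ => b (x, s)) Bt t := (bdt t).hasDerivAt
  -- spatial derivatives of the fluxes
  have F1 : deriv (fun y => α * (h (y, t))^2 * b (y, t) + κ * (h (y, t))^3 / 3) x
      = (α * (2 * A ^ 1 * Hx)) * B + (α * A ^ 2) * Bx + κ * (3 * A ^ 2 * Hx) / 3 := by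
    exact ((((Hxd.pow 2).const_mul α).mul Bxd).add
      (((Hxd.pow 3).const_mul κ).div_const 3)).deriv
  have F2 : deriv (fun y => α * h (y, t) * (b (y, t))^2 + κ * (h (y, t))^2 * b (y, t) / 3) x
      = ((α * Hx) * (B ^ 2) + (α * A) * (2 * B ^ 1 * Bx))
        + ((κ * (2 * A ^ 1 * Hx)) * B + (κ * A ^ 2) * Bx) / 3 := by
    exact (((Hxd.const_mul α).mul (Bxd.pow 2)).add
      ((((Hxd.pow 2).const_mul κ).mul Bxd).div_const 3)).deriv
  have E1 : Ht + ((α * (2 * A ^ 1 * Hx)) * B + (α * A ^ 2) * Bx + κ * (3 * A ^ 2 * Hx) / 3) = 0 := by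
    have := pde1 x t; rw [F1] at this; exact this
  have E2 : Bt + (((α * Hx) * (B ^ 2) + (α * A) * (2 * B ^ 1 * Bx))
      + ((κ * (2 * A ^ 1 * Hx)) * B + (κ * A ^ 2) * Bx) / 3) = 0 := by
    have := pde2 x t; rw [F2] at this; exact this
  -- derivatives of the Riemann invariants
  have W1t : deriv (fun s => α * h (x, s) * b (x, s) + κ * (h (x, s))^2 / 3) t
      = ((α * Ht) * B + (α * A) * Bt) + κ * (2 * A ^ 1 * Ht) / 3 := by
    exact (((Htd.const_mul α).mul Btd).add (((Htd.pow 2).const_mul κ).div_const 3)).deriv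
  have W1x : deriv (fun y => α * h (y, t) * b (y, t) + κ * (h (y, t))^2 / 3) x
      = ((α * Hx) * B + (α * A) * Bx) + κ * (2 * A ^ 1 * Hx) / 3 := by
    exact (((Hxd.const_mul α).mul Bxd).add (((Hxd.pow 2).const_mul κ).div_const 3)).deriv
  have W2t : deriv (fun s => b (x, s) / h (x, s)) t = (Bt * A - B * Ht) / A ^ 2 :=
    (Btd.div Htd hA).deriv
  have W2x : deriv (fun y => b (y, t) / h (y, t)) x = (Bx * A - B * Hx) / A ^ 2 :=
    (Bxd.div Hxd hA).deriv
  constructor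
  · rw [W1t, W1x]
    linear_combination (α * B + 2 * κ * A / 3 + 3 * α * A * B * 0) * E1 + (α * A) * E2
  · rw [W2t, W2x]
    field_simp
    linear_combination (3 * A) * E2 - (3 * B) * E1
end

section
/- Let α > 0 and κ ≥ 0. Let Ψ, Θ : (0,∞) → ℝ be differentiable and let Φ : (0,∞) → ℝ satisfy Φ' = Ψ. On the open quadrant Q = {(h,b) : h > 0, b > 0} set w₁(h,b) = αhb + κh²/3, p(h,b) = 3αb/h + κ, η(h,b) = Ψ(w₁) + √w₁ · Θ(p), and q(h,b) = 3(w₁Ψ(w₁) − Φ(w₁)) + w₁^{3/2}Θ(p). Then at every (h,b) ∈ Q the entropy/entropy-flux compatibility relation ∇q = ∇η · DF holds componentwise: ∂ₕq = ∂ₕη · ∂ₕf₁ + ∂_bη · ∂ₕf₂ and ∂_bq = ∂ₕη · ∂_bf₁ + ∂_bη · ∂_bf₂, where f₁(h,b) = αh²b + κh³/3 and f₂(h,b) = αhb² + κh²b/3. -/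
set_option maxHeartbeats 1600000 in
/-- Entropy/entropy-flux compatibility `∇q = ∇η · DF` for the class of entropy
pairs `η = Ψ(w₁) + √w₁·Θ(p)`, `q = 3(w₁Ψ(w₁) − Φ(w₁)) + w₁^{3/2}Θ(p)` of the
thin-film system with gravity, where `w₁ = αhb + κh²/3`, `p = 3αb/h + κ`,
`Φ' = Ψ`, and the fluxes are `f₁ = αh²b + κh³/3`, `f₂ = αhb² + κh²b/3`. -/
theorem thin_film_entropy_pair_compatibility
    (α κ : ℝ) (hα : 0 < α) (hκ : 0 ≤ κ)
    (Ψ Θ Φ : ℝ → ℝ)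
    (hΨ : ∀ s ∈ Set.Ioi (0:ℝ), DifferentiableAt ℝ Ψ s)
    (hΘ : ∀ s ∈ Set.Ioi (0:ℝ), DifferentiableAt ℝ Θ s)
    (hΦ : ∀ s ∈ Set.Ioi (0:ℝ), HasDerivAt Φ (Ψ s) s)
    (η q : ℝ → ℝ → ℝ)
    (hη : ∀ h b : ℝ, η h b =
      Ψ (α*h*b + κ*h^2/3) + Real.sqrt (α*h*b + κ*h^2/3) * Θ (3*α*b/h + κ))
    (hq : ∀ h b : ℝ, q h b =
      3 * ((α*h*b + κ*h^2/3) * Ψ (α*h*b + κ*h^2/3) - Φ (α*h*b + κ*h^2/3))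
        + (α*h*b + κ*h^2/3) ^ ((3:ℝ)/2) * Θ (3*α*b/h + κ)) :
    ∀ h b : ℝ, 0 < h → 0 < b →
      (deriv (fun h' => q h' b) h =
        deriv (fun h' => η h' b) h * deriv (fun h' => α*h'^2*b + κ*h'^3/3) h
          + deriv (fun b' => η h b') b * deriv (fun h' => α*h'*b^2 + κ*h'^2*b/3) h) ∧
      (deriv (fun b' => q h b') b =
        deriv (fun h' => η h' b) h * deriv (fun b' => α*h^2*b' + κ*h^3/3) b
          + deriv (fun b' => η h b') b * deriv (fun b' => α*h*b'^2 + κ*h^2*b'/3) b) := by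
  intro h b hh hb
  have hhne : h ≠ 0 := hh.ne'
  have hw : 0 < α*h*b + κ*h^2/3 := by positivity
  have hp : 0 < 3*α*b/h + κ := by positivity
  have hΨd : HasDerivAt Ψ (deriv Ψ (α*h*b + κ*h^2/3)) (α*h*b + κ*h^2/3) :=
    (hΨ _ hw).hasDerivAt
  have hΘd : HasDerivAt Θ (deriv Θ (3*α*b/h + κ)) (3*α*b/h + κ) :=
    (hΘ _ hp).hasDerivAt
  have hΦd : HasDerivAt Φ (Ψ (α*h*b + κ*h^2/3)) (α*h*b + κ*h^2/3) := hΦ _ hw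
  have hsq : HasDerivAt Real.sqrt (1 / (2 * Real.sqrt (α*h*b + κ*h^2/3)))
      (α*h*b + κ*h^2/3) := Real.hasDerivAt_sqrt hw.ne'
  have hrp : HasDerivAt (fun x : ℝ => x ^ ((3:ℝ)/2))
      ((3:ℝ)/2 * (α*h*b + κ*h^2/3) ^ ((3:ℝ)/2 - 1)) (α*h*b + κ*h^2/3) :=
    Real.hasDerivAt_rpow_const (Or.inl hw.ne')
  -- inner maps, h-direction
  have hWh : HasDerivAt (fun x : ℝ => α*x*b + κ*x^2/3) (α*b + 2*κ*h/3) h := by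
    have h1 := (((hasDerivAt_id h).const_mul α).mul_const b).add
      (((hasDerivAt_pow 2 h).const_mul κ).div_const 3)
    exact h1.congr_deriv (by norm_num; ring)
  have hPh : HasDerivAt (fun x : ℝ => 3*α*b/x + κ) (-(3*α*b)/h^2) h := by
    have h1 := ((hasDerivAt_inv hhne).const_mul (3*α*b)).add_const κ
    have h2 : (fun x : ℝ => 3*α*b * x⁻¹ + κ) = fun x : ℝ => 3*α*b/x + κ := by
      funext x; ring
    rw [h2] at h1
    exact h1.congr_deriv (by field_simp)
  -- inner maps, b-direction
  have hWb : HasDerivAt (fun y : ℝ => α*h*y + κ*h^2/3) (α*h) b := by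
    have h1 := (((hasDerivAt_id b).const_mul (α*h))).add_const (κ*h^2/3)
    exact h1.congr_deriv (by ring)
  have hPb : HasDerivAt (fun y : ℝ => 3*α*y/h + κ) (3*α/h) b := by
    have h1 := (((hasDerivAt_id b).const_mul (3*α)).div_const h).add_const κ
    exact h1.congr_deriv (by ring)
  -- entropy and entropy-flux derivatives, h-direction
  have Hηh : HasDerivAt
      (fun x : ℝ => Ψ (α*x*b + κ*x^2/3)
        + Real.sqrt (α*x*b + κ*x^2/3) * Θ (3*α*b/x + κ))
      (deriv Ψ (α*h*b + κ*h^2/3) * (α*b + 2*κ*h/3)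
        + (1 / (2 * Real.sqrt (α*h*b + κ*h^2/3)) * (α*b + 2*κ*h/3)
            * Θ (3*α*b/h + κ)
          + Real.sqrt (α*h*b + κ*h^2/3)
            * (deriv Θ (3*α*b/h + κ) * (-(3*α*b)/h^2)))) h :=
    (hΨd.comp h hWh).add ((hsq.comp h hWh).mul (hΘd.comp h hPh))
  have Hqh : HasDerivAt
      (fun x : ℝ => 3 * ((α*x*b + κ*x^2/3) * Ψ (α*x*b + κ*x^2/3)
          - Φ (α*x*b + κ*x^2/3))
        + (α*x*b + κ*x^2/3) ^ ((3:ℝ)/2) * Θ (3*α*b/x + κ))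
      (3 * (((α*b + 2*κ*h/3) * Ψ (α*h*b + κ*h^2/3)
          + (α*h*b + κ*h^2/3) * (deriv Ψ (α*h*b + κ*h^2/3) * (α*b + 2*κ*h/3)))
          - Ψ (α*h*b + κ*h^2/3) * (α*b + 2*κ*h/3))
        + ((3:ℝ)/2 * (α*h*b + κ*h^2/3) ^ ((3:ℝ)/2 - 1) * (α*b + 2*κ*h/3)
            * Θ (3*α*b/h + κ)
          + (α*h*b + κ*h^2/3) ^ ((3:ℝ)/2)
            * (deriv Θ (3*α*b/h + κ) * (-(3*α*b)/h^2)))) h :=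
    by
      have A := (((hWh.mul (hΨd.comp h hWh)).sub (hΦd.comp h hWh)).const_mul 3).add
        ((hrp.comp h hWh).mul (hΘd.comp h hPh))
      exact A
  -- entropy and entropy-flux derivatives, b-direction
  have Hηb : HasDerivAt
      (fun y : ℝ => Ψ (α*h*y + κ*h^2/3)
        + Real.sqrt (α*h*y + κ*h^2/3) * Θ (3*α*y/h + κ))
      (deriv Ψ (α*h*b + κ*h^2/3) * (α*h)
        + (1 / (2 * Real.sqrt (α*h*b + κ*h^2/3)) * (α*h) * Θ (3*α*b/h + κ)
          + Real.sqrt (α*h*b + κ*h^2/3)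
            * (deriv Θ (3*α*b/h + κ) * (3*α/h)))) b :=
    (hΨd.comp b hWb).add ((hsq.comp b hWb).mul (hΘd.comp b hPb))
  have Hqb : HasDerivAt
      (fun y : ℝ => 3 * ((α*h*y + κ*h^2/3) * Ψ (α*h*y + κ*h^2/3)
          - Φ (α*h*y + κ*h^2/3))
        + (α*h*y + κ*h^2/3) ^ ((3:ℝ)/2) * Θ (3*α*y/h + κ))
      (3 * (((α*h) * Ψ (α*h*b + κ*h^2/3)
          + (α*h*b + κ*h^2/3) * (deriv Ψ (α*h*b + κ*h^2/3) * (α*h)))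
          - Ψ (α*h*b + κ*h^2/3) * (α*h))
        + ((3:ℝ)/2 * (α*h*b + κ*h^2/3) ^ ((3:ℝ)/2 - 1) * (α*h)
            * Θ (3*α*b/h + κ)
          + (α*h*b + κ*h^2/3) ^ ((3:ℝ)/2)
            * (deriv Θ (3*α*b/h + κ) * (3*α/h)))) b :=
    by
      have A := (((hWb.mul (hΨd.comp b hWb)).sub (hΦd.comp b hWb)).const_mul 3).add
        ((hrp.comp b hWb).mul (hΘd.comp b hPb))
      exact A
  -- flux derivatives
  have Hf1h : HasDerivAt (fun x : ℝ => α*x^2*b + κ*x^3/3) (2*α*h*b + κ*h^2) h := by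
    have h1 := (((hasDerivAt_pow 2 h).const_mul α).mul_const b).add
      (((hasDerivAt_pow 3 h).const_mul κ).div_const 3)
    exact h1.congr_deriv (by norm_num; ring)
  have Hf2h : HasDerivAt (fun x : ℝ => α*x*b^2 + κ*x^2*b/3)
      (α*b^2 + 2*κ*h*b/3) h := by
    have h1 := (((hasDerivAt_id h).const_mul α).mul_const (b^2)).add
      ((((hasDerivAt_pow 2 h).const_mul κ).mul_const b).div_const 3)
    exact h1.congr_deriv (by rw [show (2:ℕ) - 1 = 1 from rfl, pow_one]; push_cast; ring)
  have Hf1b : HasDerivAt (fun y : ℝ => α*h^2*y + κ*h^3/3) (α*h^2) b := by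
    have h1 := (((hasDerivAt_id b).const_mul (α*h^2))).add_const (κ*h^3/3)
    exact h1.congr_deriv (by ring)
  have Hf2b : HasDerivAt (fun y : ℝ => α*h*y^2 + κ*h^2*y/3)
      (2*α*h*b + κ*h^2/3) b := by
    have h1 := ((hasDerivAt_pow 2 b).const_mul (α*h)).add
      ((((hasDerivAt_id b).const_mul (κ*h^2)).div_const 3))
    exact h1.congr_deriv (by norm_num; ring)
  -- rewrite all derivatives
  simp only [hη, hq]
  rw [Hqh.deriv, Hηh.deriv, Hηb.deriv, Hqb.deriv, Hf1h.deriv, Hf2h.deriv,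
    Hf1b.deriv, Hf2b.deriv]
  -- convert rpow to sqrt
  have hr1 : (α*h*b + κ*h^2/3) ^ ((3:ℝ)/2 - 1) = Real.sqrt (α*h*b + κ*h^2/3) := by
    rw [show ((3:ℝ)/2 - 1) = (1/2 : ℝ) by norm_num]
    exact (Real.sqrt_eq_rpow _).symm
  have hr2 : (α*h*b + κ*h^2/3) ^ ((3:ℝ)/2)
      = (α*h*b + κ*h^2/3) * Real.sqrt (α*h*b + κ*h^2/3) := by
    rw [show ((3:ℝ)/2) = (1 : ℝ) + 1/2 by norm_num, Real.rpow_add hw,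
      Real.rpow_one, Real.sqrt_eq_rpow]
  rw [hr1, hr2]
  have hs2 : Real.sqrt (α*h*b + κ*h^2/3) ^ 2 = α*h*b + κ*h^2/3 :=
    Real.sq_sqrt hw.le
  have hsne : Real.sqrt (α*h*b + κ*h^2/3) ≠ 0 := (Real.sqrt_pos.mpr hw).ne'
  set s := Real.sqrt (α*h*b + κ*h^2/3) with hs
  have hbv : b = (s^2 - κ*h^2/3)/(α*h) := by
    rw [hs2]; field_simp; ring
  rw [hbv]
  constructor
  · field_simp
    ring
  · field_simp
    ring
end

section
/- Let α > 0 and κ ≥ 0. Let Ψ, Θ : (0,∞) → ℝ be twice differentiable, and on the open quadrant Q = {(h,b) : h > 0, b > 0} define w₁(h,b) = αhb + κh²/3, p(h,b) = 3αb/h + κ, and η(h,b) = Ψ(w₁) + √w₁ · Θ(p). Then for every (h,b) ∈ Q, the Hessian quadratic form of η evaluated on the eigenvector r₂ = (h,b) equals r₂ᵀ (∇²η)(h,b) r₂ = 2w₁ (2w₁ Ψ''(w₁) + Ψ'(w₁)). -/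
lemma hasFDerivAt_W (α κ : ℝ) (u : ℝ × ℝ) :
    HasFDerivAt (fun y : ℝ×ℝ => α*y.1*y.2 + κ*y.1^2/3)
      ((α*u.2 + 2*κ*u.1/3) • ContinuousLinearMap.fst ℝ ℝ ℝ
        + (α*u.1) • ContinuousLinearMap.snd ℝ ℝ ℝ) u := by
  have hraw := (((hasFDerivAt_fst (E := ℝ) (F := ℝ) (𝕜 := ℝ) (p := u)).const_mul α).mul
      hasFDerivAt_snd).add
    (((hasDerivAt_pow 2 u.1).comp_hasFDerivAt u hasFDerivAt_fst).const_mul (κ/3))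
  have heq : (fun y : ℝ×ℝ => α*y.1*y.2 + κ*y.1^2/3)
      = (fun y : ℝ×ℝ => α*y.1*y.2 + (κ/3) * ((fun x => x^2) ∘ Prod.fst) y) := by
    funext y; simp only [Function.comp]; ring
  rw [heq]
  refine hraw.congr_fderiv ?_
  refine ContinuousLinearMap.ext fun v => ?_
  simp [ContinuousLinearMap.smul_apply, ContinuousLinearMap.add_apply]
  ring

lemma hasFDerivAt_P (α κ : ℝ) (u : ℝ × ℝ) (hne : u.1 ≠ 0) :
    HasFDerivAt (fun y : ℝ×ℝ => 3*α*y.2/y.1 + κ)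
      ((-(3*α*u.2/u.1^2)) • ContinuousLinearMap.fst ℝ ℝ ℝ
        + (3*α/u.1) • ContinuousLinearMap.snd ℝ ℝ ℝ) u := by
  have hraw := ((hasFDerivAt_snd (E := ℝ) (F := ℝ) (𝕜 := ℝ) (p := u)).const_mul (3*α)).mul
    ((hasDerivAt_inv hne).comp_hasFDerivAt u hasFDerivAt_fst)
  have heq : (fun y : ℝ×ℝ => 3*α*y.2/y.1 + κ)
      = (fun y : ℝ×ℝ => (3*α*y.2) * ((fun x => x⁻¹) ∘ Prod.fst) y + κ) := by
    funext y; simp only [Function.comp]; ring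
  rw [heq]
  refine (hraw.add_const κ).congr_fderiv ?_
  refine ContinuousLinearMap.ext fun v => ?_
  simp [ContinuousLinearMap.smul_apply, ContinuousLinearMap.add_apply]
  field_simp

lemma aux_line (A c s W t : ℝ) (ht : t ≠ 0) (hs : s ≠ 0) (hss : s * s = W) :
    (A + c / (2*(t*s))) * (2*t*W) = 2*t*W*A + s*c := by
  subst hss
  field_simp

lemma etaDeriv (α κ : ℝ) (hα : 0 < α) (hκ : 0 ≤ κ)
    (Ψ Ψ' Θ Θ' : ℝ → ℝ)
    (hΨ' : ∀ s ∈ Set.Ioi (0:ℝ), HasDerivAt Ψ (Ψ' s) s)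
    (hΘ' : ∀ s ∈ Set.Ioi (0:ℝ), HasDerivAt Θ (Θ' s) s)
    (η : ℝ × ℝ → ℝ)
    (hη : ∀ u : ℝ × ℝ, η u =
      Ψ (α*u.1*u.2 + κ*u.1^2/3)
        + Real.sqrt (α*u.1*u.2 + κ*u.1^2/3) * Θ (3*α*u.2/u.1 + κ))
    (h b : ℝ) (u : ℝ × ℝ) (hu1 : 0 < u.1) (hu2 : 0 < u.2) :
    ∃ L : ℝ × ℝ →L[ℝ] ℝ, HasFDerivAt η L u ∧
      L (h, b) =
        (Ψ' (α*u.1*u.2 + κ*u.1^2/3)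
            + Θ (3*α*u.2/u.1 + κ) / (2 * Real.sqrt (α*u.1*u.2 + κ*u.1^2/3)))
          * ((α*u.2 + 2*κ*u.1/3)*h + α*u.1*b)
        + Real.sqrt (α*u.1*u.2 + κ*u.1^2/3) * Θ' (3*α*u.2/u.1 + κ)
          * (3*α*b/u.1 - 3*α*u.2*h/u.1^2) := by
  have hne : u.1 ≠ 0 := ne_of_gt hu1
  have hW0 : 0 < α*u.1*u.2 + κ*u.1^2/3 := by positivity
  have hP0 : 0 < 3*α*u.2/u.1 + κ := by positivity
  have hW := hasFDerivAt_W α κ u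
  have hP := hasFDerivAt_P α κ u hne
  have hΨW := (hΨ' _ hW0).comp_hasFDerivAt u hW
  have hsq := (Real.hasDerivAt_sqrt hW0.ne').comp_hasFDerivAt u hW
  have hΘP := (hΘ' _ hP0).comp_hasFDerivAt u hP
  refine ⟨_, (hΨW.add (hsq.mul hΘP)).congr_of_eventuallyEq
      (Filter.Eventually.of_forall hη), ?_⟩
  have hsq0 : Real.sqrt (α*u.1*u.2 + κ*u.1^2/3) ≠ 0 := by positivity
  simp only [ContinuousLinearMap.add_apply, ContinuousLinearMap.smul_apply,
    ContinuousLinearMap.coe_fst', ContinuousLinearMap.coe_snd', Function.comp,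
    smul_eq_mul]
  field_simp
  ring

/-- Hessian quadratic form of the candidate entropy `η = Ψ(w₁) + √w₁·Θ(p)`
of the thin-film system with gravity in the direction of the second
eigenvector `r₂ = (h,b)`:
`r₂ᵀ (∇²η)(h,b) r₂ = 2w₁(2w₁Ψ''(w₁) + Ψ'(w₁))` on the open quadrant. -/
theorem thin_film_entropy_hessian_r2
    (α κ : ℝ) (hα : 0 < α) (hκ : 0 ≤ κ)
    (Ψ Ψ' Ψ'' Θ Θ' Θ'' : ℝ → ℝ)
    (hΨ' : ∀ s ∈ Set.Ioi (0:ℝ), HasDerivAt Ψ (Ψ' s) s)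
    (hΨ'' : ∀ s ∈ Set.Ioi (0:ℝ), HasDerivAt Ψ' (Ψ'' s) s)
    (hΘ' : ∀ s ∈ Set.Ioi (0:ℝ), HasDerivAt Θ (Θ' s) s)
    (hΘ'' : ∀ s ∈ Set.Ioi (0:ℝ), HasDerivAt Θ' (Θ'' s) s)
    (η : ℝ × ℝ → ℝ)
    (hη : ∀ u : ℝ × ℝ, η u =
      Ψ (α*u.1*u.2 + κ*u.1^2/3)
        + Real.sqrt (α*u.1*u.2 + κ*u.1^2/3) * Θ (3*α*u.2/u.1 + κ)) :
    ∀ h b : ℝ, 0 < h → 0 < b →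
      fderiv ℝ (fun u => fderiv ℝ η u (h, b)) (h, b) (h, b) =
        2 * (α*h*b + κ*h^2/3)
          * (2 * (α*h*b + κ*h^2/3) * Ψ'' (α*h*b + κ*h^2/3)
              + Ψ' (α*h*b + κ*h^2/3)) := by
  intro h b hh hb
  have hne : h ≠ 0 := ne_of_gt hh
  have hw : (0:ℝ) < α*h*b + κ*h^2/3 := by positivity
  have hp : (0:ℝ) < 3*α*b/h + κ := by positivity
  set G : ℝ × ℝ → ℝ := fun u =>
    (Ψ' (α*u.1*u.2 + κ*u.1^2/3)
        + Θ (3*α*u.2/u.1 + κ) / (2 * Real.sqrt (α*u.1*u.2 + κ*u.1^2/3)))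
      * ((α*u.2 + 2*κ*u.1/3)*h + α*u.1*b)
    + Real.sqrt (α*u.1*u.2 + κ*u.1^2/3) * Θ' (3*α*u.2/u.1 + κ)
      * (3*α*b/u.1 - 3*α*u.2*h/u.1^2) with hGdef
  -- step 1: fderiv η · (h,b) agrees with G near (h,b)
  have hmem : {u : ℝ×ℝ | 0 < u.1 ∧ 0 < u.2} ∈ nhds ((h,b) : ℝ×ℝ) := by
    refine IsOpen.mem_nhds ?_ ⟨hh, hb⟩
    exact (isOpen_lt continuous_const continuous_fst).inter
      (isOpen_lt continuous_const continuous_snd)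
  have heq : (fun u => fderiv ℝ η u (h, b)) =ᶠ[nhds ((h,b) : ℝ×ℝ)] G := by
    refine Filter.eventuallyEq_of_mem hmem fun u hu => ?_
    obtain ⟨L, hL, hLv⟩ := etaDeriv α κ hα hκ Ψ Ψ' Θ Θ' hΨ' hΘ' η hη h b u hu.1 hu.2
    rw [hL.fderiv, hLv]
  have hfd : fderiv ℝ (fun u => fderiv ℝ η u (h, b)) ((h,b) : ℝ×ℝ)
      = fderiv ℝ G ((h,b) : ℝ×ℝ) := heq.fderiv_eq
  -- step 2: G is differentiable at (h,b)
  have hW := hasFDerivAt_W α κ ((h,b) : ℝ×ℝ)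
  have hP := hasFDerivAt_P α κ ((h,b) : ℝ×ℝ) hne
  have dW : DifferentiableAt ℝ (fun u : ℝ×ℝ => α*u.1*u.2 + κ*u.1^2/3) (h,b) :=
    hW.differentiableAt
  have dΨ' : DifferentiableAt ℝ (fun u : ℝ×ℝ => Ψ' (α*u.1*u.2 + κ*u.1^2/3)) (h,b) :=
    ((hΨ'' _ hw).comp_hasFDerivAt ((h,b) : ℝ×ℝ) hW).differentiableAt
  have dΘ : DifferentiableAt ℝ (fun u : ℝ×ℝ => Θ (3*α*u.2/u.1 + κ)) (h,b) :=
    ((hΘ' _ hp).comp_hasFDerivAt ((h,b) : ℝ×ℝ) hP).differentiableAt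
  have dΘ' : DifferentiableAt ℝ (fun u : ℝ×ℝ => Θ' (3*α*u.2/u.1 + κ)) (h,b) :=
    ((hΘ'' _ hp).comp_hasFDerivAt ((h,b) : ℝ×ℝ) hP).differentiableAt
  have dsq : DifferentiableAt ℝ
      (fun u : ℝ×ℝ => Real.sqrt (α*u.1*u.2 + κ*u.1^2/3)) (h,b) :=
    ((Real.hasDerivAt_sqrt hw.ne').comp_hasFDerivAt ((h,b) : ℝ×ℝ) hW).differentiableAt
  have hsqne : (2 : ℝ) * Real.sqrt (α*h*b + κ*h^2/3) ≠ 0 := by positivity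
  have dA : DifferentiableAt ℝ
      (fun u : ℝ×ℝ => (α*u.2 + 2*κ*u.1/3)*h + α*u.1*b) (h,b) := by
    fun_prop
  have ediv1 : (fun u : ℝ×ℝ => 3*α*b/u.1 - 3*α*u.2*h/u.1^2)
      = fun u : ℝ×ℝ => 3*α*b*(u.1)⁻¹ - 3*α*u.2*h*(u.1^2)⁻¹ := by
    funext u; rw [div_eq_mul_inv, div_eq_mul_inv]
  have dB : DifferentiableAt ℝ
      (fun u : ℝ×ℝ => 3*α*b/u.1 - 3*α*u.2*h/u.1^2) (h,b) := by
    rw [ediv1]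
    exact ((differentiableAt_fst.inv hne).const_mul (3*α*b)).sub
      (((differentiableAt_snd.const_mul (3*α)).mul_const h).mul
        ((differentiableAt_fst.pow 2).inv (pow_ne_zero 2 hne)))
  have ediv2 : (fun u : ℝ×ℝ => Θ (3*α*u.2/u.1 + κ)
        / (2 * Real.sqrt (α*u.1*u.2 + κ*u.1^2/3)))
      = fun u : ℝ×ℝ => Θ (3*α*u.2/u.1 + κ)
        * (2 * Real.sqrt (α*u.1*u.2 + κ*u.1^2/3))⁻¹ := by
    funext u; rw [div_eq_mul_inv]
  have ddiv : DifferentiableAt ℝ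
      (fun u : ℝ×ℝ => Θ (3*α*u.2/u.1 + κ)
        / (2 * Real.sqrt (α*u.1*u.2 + κ*u.1^2/3))) (h,b) := by
    rw [ediv2]
    exact dΘ.mul ((dsq.const_mul 2).inv hsqne)
  have hGd : DifferentiableAt ℝ G (h,b) := by
    rw [hGdef]
    exact ((dΨ'.add ddiv).mul dA).add ((dsq.mul dΘ').mul dB)
  -- step 3: directional derivative via the line t ↦ (t h, t b)
  have hline : HasDerivAt (fun t : ℝ => ((t*h, t*b) : ℝ×ℝ)) ((h, b) : ℝ×ℝ) 1 := by
    simpa using ((hasDerivAt_id (1:ℝ)).mul_const h).prodMk ((hasDerivAt_id (1:ℝ)).mul_const b)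
  have hGat : HasFDerivAt G (fderiv ℝ G ((h,b) : ℝ×ℝ)) ((1:ℝ)*h, (1:ℝ)*b) := by
    rw [one_mul, one_mul]; exact hGd.hasFDerivAt
  have hcomp : HasDerivAt (fun t : ℝ => G (t*h, t*b))
      (fderiv ℝ G ((h,b) : ℝ×ℝ) ((h, b) : ℝ×ℝ)) 1 :=
    by have := hGat.comp_hasDerivAt 1 hline; exact this
  -- step 4: on the line, G is an explicit 1-variable function
  have hss : Real.sqrt (α*h*b + κ*h^2/3) * Real.sqrt (α*h*b + κ*h^2/3)
      = α*h*b + κ*h^2/3 := Real.mul_self_sqrt hw.le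
  have hsne : Real.sqrt (α*h*b + κ*h^2/3) ≠ 0 := by positivity
  have hphi : (fun t : ℝ => G (t*h, t*b)) =ᶠ[nhds (1:ℝ)]
      (fun t : ℝ => 2*t*(α*h*b + κ*h^2/3) * Ψ' (t^2*(α*h*b + κ*h^2/3))
        + Real.sqrt (α*h*b + κ*h^2/3) * Θ (3*α*b/h + κ)) := by
    refine Filter.eventually_of_mem (isOpen_Ioi.mem_nhds (by norm_num : (0:ℝ) < 1))
      fun t ht => ?_
    have ht0 : (0:ℝ) < t := ht
    have htne : t ≠ 0 := ne_of_gt ht0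
    have e1 : α*(t*h)*(t*b) + κ*(t*h)^2/3 = t^2*(α*h*b + κ*h^2/3) := by ring
    have e2 : 3*α*(t*b)/(t*h) + κ = 3*α*b/h + κ := by
      field_simp
    have e3 : Real.sqrt (t^2*(α*h*b + κ*h^2/3))
        = t * Real.sqrt (α*h*b + κ*h^2/3) := by
      rw [Real.sqrt_mul (sq_nonneg t), Real.sqrt_sq ht0.le]
    have eB : 3*α*b/(t*h) - 3*α*(t*b)*h/(t*h)^2 = 0 := by
      field_simp
      ring
    have eA : (α*(t*b) + 2*κ*(t*h)/3)*h + α*(t*h)*b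
        = 2*t*(α*h*b + κ*h^2/3) := by ring
    simp only [hGdef]
    rw [e1, e2, e3, eB, eA, mul_zero, add_zero]
    exact aux_line _ _ _ _ _ htne hsne hss
  -- step 5: explicit derivative of the 1-variable function at t = 1
  have hw1 : HasDerivAt Ψ' (Ψ'' (α*h*b + κ*h^2/3)) ((1:ℝ)^2*(α*h*b + κ*h^2/3)) := by
    rw [one_pow, one_mul]; exact hΨ'' _ hw
  have hinner : HasDerivAt (fun t : ℝ => t^2*(α*h*b + κ*h^2/3))
      (2*(α*h*b + κ*h^2/3)) 1 := by
    simpa using (hasDerivAt_pow 2 (1:ℝ)).mul_const (α*h*b + κ*h^2/3)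
  have hΨc := hw1.comp 1 hinner
  have hlin : HasDerivAt (fun t : ℝ => 2*t*(α*h*b + κ*h^2/3))
      (2*(α*h*b + κ*h^2/3)) 1 := by
    simpa using ((hasDerivAt_id (1:ℝ)).const_mul 2).mul_const (α*h*b + κ*h^2/3)
  have hψ := (hlin.mul hΨc).add_const
      (Real.sqrt (α*h*b + κ*h^2/3) * Θ (3*α*b/h + κ))
  have hψ' : HasDerivAt
      (fun t : ℝ => 2*t*(α*h*b + κ*h^2/3) * Ψ' (t^2*(α*h*b + κ*h^2/3))
        + Real.sqrt (α*h*b + κ*h^2/3) * Θ (3*α*b/h + κ))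
      (2 * (α*h*b + κ*h^2/3)
        * (2 * (α*h*b + κ*h^2/3) * Ψ'' (α*h*b + κ*h^2/3)
            + Ψ' (α*h*b + κ*h^2/3))) 1 := by
    refine hψ.congr_deriv ?_
    norm_num
    ring
  have hφ := hψ'.congr_of_eventuallyEq hphi
  have hval := hcomp.unique hφ
  rw [hfd, hval]
end

section
/- Let α > 0 and κ ≥ 0. Let Ψ : (0,∞) → ℝ be twice differentiable with Ψ'(s) < 0, Ψ''(s) > 0, and 2sΨ''(s) + Ψ'(s) > 0 for all s > 0, and let A, B ≥ 0 be constants. Define η on the open convex quadrant Q = {(h,b) ∈ ℝ² : h > 0, b > 0} by η(h,b) = Ψ(w₁) + √w₁ · (A√p + B/√p), where w₁ = αhb + κh²/3 and p = 3αb/h + κ. Then η is strictly convex on Q. -/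
lemma tf_seg_pos {x y t : ℝ} (hx : 0 < x) (hy : 0 < y) (ht0 : 0 ≤ t) (ht1 : t ≤ 1) :
    0 < x + t*(y - x) := by
  rcases ht0.eq_or_lt with h | h
  · simp [← h, hx]
  · nlinarith [mul_pos h hy, mul_nonneg (sub_nonneg.mpr ht1) hx.le]

lemma tf_sqrt_lin (α κ A B h b : ℝ) (hα : 0 < α) (hκ : 0 ≤ κ)
    (hh : 0 < h) (hb : 0 < b) :
    Real.sqrt (α*h*b + κ*h^2/3) * (A * Real.sqrt (3*α*b/h + κ) + B / Real.sqrt (3*α*b/h + κ))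
      = (A*(3*α*b + κ*h) + B*h) / Real.sqrt 3 := by
  have hp0 : 0 < 3*α*b/h + κ := by positivity
  set p := 3*α*b/h + κ with hpdef
  have hsq : Real.sqrt (α*h*b + κ*h^2/3) = h * Real.sqrt p / Real.sqrt 3 := by
    have hw : α*h*b + κ*h^2/3 = (h * Real.sqrt p / Real.sqrt 3)^2 := by
      rw [div_pow, mul_pow, Real.sq_sqrt hp0.le, Real.sq_sqrt (by norm_num : (0:ℝ) ≤ 3)]
      field_simp [hpdef]
      rw [hpdef]; field_simp
    rw [hw, Real.sqrt_sq (by positivity)]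
  have hsp : Real.sqrt p ≠ 0 := by positivity
  have hs3 : Real.sqrt 3 ≠ 0 := by positivity
  have e1 : Real.sqrt p * Real.sqrt p = p := Real.mul_self_sqrt hp0.le
  have hhp : h * p = 3*α*b + κ*h := by rw [hpdef]; field_simp
  rw [hsq]
  field_simp
  linear_combination (A * h) * e1 + A * hhp

lemma tf_quad_pos (α κ h b u v d1 d2 : ℝ) (hα : 0 < α) (hκ : 0 ≤ κ)
    (hh : 0 < h) (hb : 0 < b) (hu : 0 < u) (hv : v < 0)
    (hc : 0 < 2*(α*h*b + κ*h^2/3)*u + v) (hd : d1 ≠ 0 ∨ d2 ≠ 0) :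
    0 < u * (α*(d1*b + h*d2) + κ*(2*h*d1)/3)^2 + v * (2*α*d1*d2 + 2*κ*d1^2/3) := by
  by_cases h1 : d1 = 0
  · subst h1
    have hd2 : d2 ≠ 0 := by tauto
    have : 0 < u * (α*(h*d2))^2 := by positivity
    nlinarith [this]
  · have hH22 : 0 < u * (α*h)^2 := by positivity
    have hdet : 0 < α^2*(-v)*(2*(α*h*b + κ*h^2/3)*u+v) :=
      mul_pos (mul_pos (pow_pos hα 2) (neg_pos.mpr hv)) hc
    have key : (u*(α*h)^2) * (u * (α*(d1*b + h*d2) + κ*(2*h*d1)/3)^2 + v * (2*α*d1*d2 + 2*κ*d1^2/3))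
        = ((u*(α*b+2*κ*h/3)*(α*h) + v*α)*d1 + (u*(α*h)^2)*d2)^2
          + α^2*(-v)*(2*(α*h*b + κ*h^2/3)*u+v)*d1^2 := by ring
    have hd1sq : 0 < d1^2 := lt_of_le_of_ne (sq_nonneg d1) (Ne.symm (pow_ne_zero 2 h1))
    nlinarith [key, sq_nonneg ((u*(α*b+2*κ*h/3)*(α*h) + v*α)*d1 + (u*(α*h)^2)*d2),
      mul_pos hdet hd1sq, hH22,
      mul_nonneg hH22.le (neg_nonneg.mpr (le_of_lt hv))]

set_option maxHeartbeats 1000000 in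
/-- Strict convexity of the entropies `η = Ψ(w₁) + √w₁·(A√p + B/√p)` of the
thin-film system with gravity on the open quadrant, where `w₁ = αhb + κh²/3`
and `p = 3αb/h + κ`, under the sufficient conditions `Ψ' < 0`, `Ψ'' > 0`,
`2sΨ''(s) + Ψ'(s) > 0` and `A, B ≥ 0`. -/
theorem thin_film_entropy_strict_convexity
    (α κ : ℝ) (hα : 0 < α) (hκ : 0 ≤ κ)
    (Ψ Ψ' Ψ'' : ℝ → ℝ)
    (hΨ' : ∀ s ∈ Set.Ioi (0:ℝ), HasDerivAt Ψ (Ψ' s) s)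
    (hΨ'' : ∀ s ∈ Set.Ioi (0:ℝ), HasDerivAt Ψ' (Ψ'' s) s)
    (hneg : ∀ s : ℝ, 0 < s → Ψ' s < 0)
    (hpos : ∀ s : ℝ, 0 < s → 0 < Ψ'' s)
    (hcomb : ∀ s : ℝ, 0 < s → 0 < 2 * s * Ψ'' s + Ψ' s)
    (A B : ℝ) (hA : 0 ≤ A) (hB : 0 ≤ B) :
    StrictConvexOn ℝ {u : ℝ × ℝ | 0 < u.1 ∧ 0 < u.2}
      (fun u =>
        Ψ (α*u.1*u.2 + κ*u.1^2/3)
          + Real.sqrt (α*u.1*u.2 + κ*u.1^2/3)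
            * (A * Real.sqrt (3*α*u.2/u.1 + κ)
                + B / Real.sqrt (3*α*u.2/u.1 + κ))) := by
  have hQconv : Convex ℝ {u : ℝ × ℝ | 0 < u.1 ∧ 0 < u.2} := by
    have he : {u : ℝ × ℝ | 0 < u.1 ∧ 0 < u.2} = Set.Ioi (0:ℝ) ×ˢ Set.Ioi (0:ℝ) := by
      ext u; simp [Set.mem_prod]
    rw [he]; exact (convex_Ioi 0).prod (convex_Ioi 0)
  refine ⟨hQconv, ?_⟩
  rintro ⟨x1, x2⟩ hx ⟨y1, y2⟩ hy hxy a b ha hb hab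
  simp only [Set.mem_setOf_eq] at hx hy
  obtain ⟨hx1, hx2⟩ := hx
  obtain ⟨hy1, hy2⟩ := hy
  have hab' : a = 1 - b := by linarith
  subst hab'
  set d1 := y1 - x1 with hd1def
  set d2 := y2 - x2 with hd2def
  have hdne : d1 ≠ 0 ∨ d2 ≠ 0 := by
    by_contra hcon
    push_neg at hcon
    exact hxy (Prod.ext_iff.mpr ⟨by rw [hd1def] at hcon; linarith [hcon.1],
      by rw [hd2def] at hcon; linarith [hcon.2]⟩)
  have hseg1 : ∀ t ∈ Set.Icc (0:ℝ) 1, 0 < x1 + t*d1 := fun t ht =>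
    tf_seg_pos hx1 hy1 ht.1 ht.2
  have hseg2 : ∀ t ∈ Set.Icc (0:ℝ) 1, 0 < x2 + t*d2 := fun t ht =>
    tf_seg_pos hx2 hy2 ht.1 ht.2
  set q : ℝ → ℝ := fun t => α*(x1+t*d1)*(x2+t*d2) + κ*(x1+t*d1)^2/3 with hqdef
  set qd : ℝ → ℝ := fun t => α*(d1*(x2+t*d2) + (x1+t*d1)*d2) + κ*(2*(x1+t*d1)*d1)/3 with hqddef
  have hqpos : ∀ t ∈ Set.Icc (0:ℝ) 1, 0 < q t := by
    intro t ht
    have h1 := hseg1 t ht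
    have h2 := hseg2 t ht
    rw [hqdef]
    have : 0 < α*(x1+t*d1)*(x2+t*d2) := mul_pos (mul_pos hα h1) h2
    have h3 : 0 ≤ κ*(x1+t*d1)^2/3 := by positivity
    exact add_pos_of_pos_of_nonneg this h3
  have hqc : Continuous q := by rw [hqdef]; continuity
  have hU : IsOpen {t : ℝ | 0 < q t} := isOpen_lt continuous_const hqc
  have hsubU : Set.Icc (0:ℝ) 1 ⊆ {t : ℝ | 0 < q t} := fun t ht => hqpos t ht
  have hT1 : ∀ t : ℝ, HasDerivAt (fun s : ℝ => x1 + s*d1) d1 t := by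
    intro t
    simpa using ((hasDerivAt_id t).mul_const d1).const_add x1
  have hT2 : ∀ t : ℝ, HasDerivAt (fun s : ℝ => x2 + s*d2) d2 t := by
    intro t
    simpa using ((hasDerivAt_id t).mul_const d2).const_add x2
  have hq' : ∀ t : ℝ, HasDerivAt q (qd t) t := by
    intro t
    rw [hqdef, hqddef]
    have h1 : HasDerivAt (fun s : ℝ => α*(x1+s*d1)*(x2+s*d2))
        (α*d1*(x2+t*d2) + α*(x1+t*d1)*d2) t :=
      (((hT1 t).const_mul α).mul (hT2 t))
    have h2 : HasDerivAt (fun s : ℝ => κ*(x1+s*d1)^2/3) (κ*(2*(x1+t*d1)^1*d1)/3) t :=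
      (((hT1 t).pow 2).const_mul κ).div_const 3
    have := h1.add h2
    refine this.congr_deriv ?_
    push_cast
    ring
  set L0 : ℝ := (A*(3*α*x2 + κ*x1) + B*x1)/Real.sqrt 3 with hL0def
  set L1 : ℝ := (A*(3*α*d2 + κ*d1) + B*d1)/Real.sqrt 3 with hL1def
  set lin : ℝ → ℝ := fun t => (A*(3*α*(x2+t*d2) + κ*(x1+t*d1)) + B*(x1+t*d1))/Real.sqrt 3
    with hlindef
  have hlineq : lin = fun t => L0 + L1*t := by
    funext t
    rw [hlindef, hL0def, hL1def]
    ring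
  have hlin' : ∀ t : ℝ, HasDerivAt lin L1 t := by
    intro t
    rw [hlineq]
    simpa using ((hasDerivAt_id t).const_mul L1).const_add L0
  set φ : ℝ → ℝ := fun t => Ψ (q t) + lin t with hφdef
  set φd : ℝ → ℝ := fun t => Ψ' (q t) * qd t + L1 with hφddef
  have hφ' : ∀ t ∈ {t : ℝ | 0 < q t}, HasDerivAt φ (φd t) t := by
    intro t ht
    rw [hφdef, hφddef]
    exact ((hΨ' (q t) ht).comp t (hq' t)).add (hlin' t)
  have hqd' : ∀ t : ℝ, HasDerivAt qd (2*α*d1*d2 + 2*κ*d1^2/3) t := by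
    intro t
    rw [hqddef]
    have h1 : HasDerivAt (fun s : ℝ => α*(d1*(x2+s*d2) + (x1+s*d1)*d2))
        (α*(d1*d2 + d1*d2)) t := by
      refine HasDerivAt.const_mul α ?_
      exact ((hT2 t).const_mul d1).add ((hT1 t).mul_const d2)
    have h2 : HasDerivAt (fun s : ℝ => κ*(2*(x1+s*d1)*d1)/3) (κ*(2*d1*d1)/3) t := by
      refine HasDerivAt.div_const ?_ 3
      refine HasDerivAt.const_mul κ ?_
      exact ((hT1 t).const_mul 2).mul_const d1
    have := h1.add h2
    refine this.congr_deriv ?_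
    ring
  have hφ'' : ∀ t ∈ {t : ℝ | 0 < q t},
      HasDerivAt φd (Ψ'' (q t) * (qd t)^2 + Ψ' (q t) * (2*α*d1*d2 + 2*κ*d1^2/3)) t := by
    intro t ht
    rw [hφddef]
    have h1 : HasDerivAt (fun s => Ψ' (q s)) (Ψ'' (q t) * qd t) t :=
      (hΨ'' (q t) ht).comp t (hq' t)
    have := (h1.mul (hqd' t)).add_const L1
    refine this.congr_deriv ?_
    ring
  have hcont : ContinuousOn φ (Set.Icc (0:ℝ) 1) := fun t ht =>
    ((hφ' t (hsubU ht)).continuousAt).continuousWithinAt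
  have hderiv2 : ∀ t ∈ interior (Set.Icc (0:ℝ) 1), 0 < deriv^[2] φ t := by
    intro t ht
    rw [interior_Icc] at ht
    have htI : t ∈ Set.Icc (0:ℝ) 1 := ⟨ht.1.le, ht.2.le⟩
    have htU : t ∈ {t : ℝ | 0 < q t} := hsubU htI
    have heq : deriv φ =ᶠ[nhds t] φd := by
      filter_upwards [hU.mem_nhds htU] with s hs
      exact (hφ' s hs).deriv
    have hval : deriv^[2] φ t = Ψ'' (q t) * (qd t)^2 + Ψ' (q t) * (2*α*d1*d2 + 2*κ*d1^2/3) := by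
      show deriv (deriv φ) t = _
      rw [heq.deriv_eq]
      exact (hφ'' t htU).deriv
    rw [hval]
    have hqt : 0 < q t := htU
    have h1p := hseg1 t htI
    have h2p := hseg2 t htI
    have hcm := hcomb (q t) hqt
    have hps := hpos (q t) hqt
    have hng := hneg (q t) hqt
    simp only [hqdef, hqddef] at hcm hps hng ⊢
    exact tf_quad_pos α κ (x1+t*d1) (x2+t*d2) _ _ d1 d2 hα hκ h1p h2p hps hng hcm hdne
  have hφconv : StrictConvexOn ℝ (Set.Icc (0:ℝ) 1) φ :=
    strictConvexOn_of_deriv2_pos (convex_Icc 0 1) hcont hderiv2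
  have hb1 : b < 1 := by linarith
  have hlt : φ b < (1-b) * φ 0 + b * φ 1 := by
    have := hφconv.2 (Set.left_mem_Icc.mpr zero_le_one) (Set.right_mem_Icc.mpr zero_le_one)
      (by norm_num : (0:ℝ) ≠ 1) ha hb (by ring)
    simpa using this
  -- now rewrite the goal
  have e0 : φ 0 = Ψ (α*x1*x2 + κ*x1^2/3) + (A*(3*α*x2 + κ*x1) + B*x1)/Real.sqrt 3 := by
    rw [hφdef, hqdef, hlindef]
    norm_num
  have e1 : φ 1 = Ψ (α*(x1+d1)*(x2+d2) + κ*(x1+d1)^2/3)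
      + (A*(3*α*(x2+d2) + κ*(x1+d1)) + B*(x1+d1))/Real.sqrt 3 := by
    rw [hφdef, hqdef, hlindef]
    norm_num
  have eb : φ b = Ψ (α*(x1+b*d1)*(x2+b*d2) + κ*(x1+b*d1)^2/3)
      + (A*(3*α*(x2+b*d2) + κ*(x1+b*d1)) + B*(x1+b*d1))/Real.sqrt 3 := by
    rw [hφdef, hqdef, hlindef]
  have hzb : ∀ u v du : ℝ, (1-b)*u + b*(u+du) = u + b*du := by intro u v du; ring
  have hz1 : 0 < x1 + b*d1 := hseg1 b ⟨hb.le, hb1.le⟩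
  have hz2 : 0 < x2 + b*d2 := hseg2 b ⟨hb.le, hb1.le⟩
  have hy1' : y1 = x1 + d1 := by rw [hd1def]; ring
  have hy2' : y2 = x2 + d2 := by rw [hd2def]; ring
  simp only [Prod.smul_mk, Prod.mk_add_mk, smul_eq_mul, Prod.fst, Prod.snd]
  rw [show (1-b)*x1 + b*y1 = x1 + b*d1 by rw [hd1def]; ring,
      show (1-b)*x2 + b*y2 = x2 + b*d2 by rw [hd2def]; ring]
  rw [tf_sqrt_lin α κ A B x1 x2 hα hκ hx1 hx2,
      tf_sqrt_lin α κ A B y1 y2 hα hκ hy1 hy2,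
      tf_sqrt_lin α κ A B (x1+b*d1) (x2+b*d2) hα hκ hz1 hz2]
  rw [hy1', hy2']
  rw [← e0, ← e1, ← eb]
  exact hlt
end

section
/- Let α > 0 and κ ≥ 0. The function η(h,b) = h + 1/(3αhb + κh²) is strictly convex on the open convex quadrant {(h,b) ∈ ℝ² : h > 0, b > 0}. -/
open Real

private lemma quadrant_convex : Convex ℝ {u : ℝ × ℝ | 0 < u.1 ∧ 0 < u.2} := by
  intro x hx y hy a b ha hb hab
  obtain ⟨hx1, hx2⟩ := hx
  obtain ⟨hy1, hy2⟩ := hy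
  have h1 : (a • x + b • y).1 = a * x.1 + b * y.1 := by simp
  have h2 : (a • x + b • y).2 = a * x.2 + b * y.2 := by simp
  constructor
  · rw [h1]
    rcases eq_or_lt_of_le ha with h | h
    · have hb' : b = 1 := by linarith
      simp [← h, hb']; linarith
    · nlinarith
  · rw [h2]
    rcases eq_or_lt_of_le ha with h | h
    · have hb' : b = 1 := by linarith
      simp [← h, hb']; linarith
    · nlinarith

private lemma logsum_strict_convex (α κ : ℝ) (hα : 0 < α) (hκ : 0 ≤ κ) :
    StrictConvexOn ℝ {u : ℝ × ℝ | 0 < u.1 ∧ 0 < u.2}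
      (fun u : ℝ × ℝ => -(Real.log u.1 + Real.log (3*α*u.2 + κ*u.1))) := by
  refine ⟨quadrant_convex, ?_⟩
  rintro x ⟨hx1, hx2⟩ y ⟨hy1, hy2⟩ hxy a b ha hb hab
  have hz1 : (a • x + b • y).1 = a * x.1 + b * y.1 := by simp
  have hz2 : (a • x + b • y).2 = a * x.2 + b * y.2 := by simp
  have hLx : 0 < 3*α*x.2 + κ*x.1 := by nlinarith
  have hLy : 0 < 3*α*y.2 + κ*y.1 := by nlinarith
  simp only [hz1, hz2, smul_eq_mul]
  have hLz : 3*α*(a * x.2 + b * y.2) + κ*(a * x.1 + b * y.1)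
      = a * (3*α*x.2 + κ*x.1) + b * (3*α*y.2 + κ*y.1) := by ring
  rw [hLz]
  -- nonstrict concavity of log in both slots
  have hcc := strictConcaveOn_log_Ioi.concaveOn
  have h1 : a * Real.log x.1 + b * Real.log y.1 ≤ Real.log (a * x.1 + b * y.1) := by
    have := hcc.2 (Set.mem_Ioi.mpr hx1) (Set.mem_Ioi.mpr hy1) ha.le hb.le hab
    simpa [smul_eq_mul] using this
  have h2 : a * Real.log (3*α*x.2 + κ*x.1) + b * Real.log (3*α*y.2 + κ*y.1)
      ≤ Real.log (a * (3*α*x.2 + κ*x.1) + b * (3*α*y.2 + κ*y.1)) := by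
    have := hcc.2 (Set.mem_Ioi.mpr hLx) (Set.mem_Ioi.mpr hLy) ha.le hb.le hab
    simpa [smul_eq_mul] using this
  by_cases hfst : x.1 = y.1
  · -- then second coordinates differ, strict in second log
    have hsnd : x.2 ≠ y.2 := by
      intro h; exact hxy (Prod.ext hfst h)
    have hLne : (3*α*x.2 + κ*x.1) ≠ (3*α*y.2 + κ*y.1) := by
      intro h
      apply hsnd
      have : 3*α*(x.2 - y.2) = 0 := by rw [hfst] at h; linarith
      have h3α : (3:ℝ)*α ≠ 0 := by positivity
      have := mul_eq_zero.mp this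
      rcases this with h' | h'
      · exact absurd h' h3α
      · linarith
    have h2' : a * Real.log (3*α*x.2 + κ*x.1) + b * Real.log (3*α*y.2 + κ*y.1)
        < Real.log (a * (3*α*x.2 + κ*x.1) + b * (3*α*y.2 + κ*y.1)) := by
      have := strictConcaveOn_log_Ioi.2 (Set.mem_Ioi.mpr hLx) (Set.mem_Ioi.mpr hLy)
        hLne ha hb hab
      simpa [smul_eq_mul] using this
    linarith
  · have h1' : a * Real.log x.1 + b * Real.log y.1 < Real.log (a * x.1 + b * y.1) := by
      have := strictConcaveOn_log_Ioi.2 (Set.mem_Ioi.mpr hx1) (Set.mem_Ioi.mpr hy1)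
        hfst ha hb hab
      simpa [smul_eq_mul] using this
    linarith

/-- The function `η(h,b) = h + 1/(3αhb + κh²)` is strictly convex on the open
quadrant `{(h,b) : h > 0, b > 0}` (the simplest strictly convex entropy of the
thin-film system with gravity). -/
theorem thin_film_simple_entropy_strict_convexity
    (α κ : ℝ) (hα : 0 < α) (hκ : 0 ≤ κ) :
    StrictConvexOn ℝ {u : ℝ × ℝ | 0 < u.1 ∧ 0 < u.2}
      (fun u => u.1 + 1 / (3*α*u.1*u.2 + κ*u.1^2)) := by
  set S : Set (ℝ × ℝ) := {u : ℝ × ℝ | 0 < u.1 ∧ 0 < u.2} with hS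
  have key : ∀ u ∈ S, 1 / (3*α*u.1*u.2 + κ*u.1^2)
      = Real.exp (-(Real.log u.1 + Real.log (3*α*u.2 + κ*u.1))) := by
    rintro u ⟨hu1, hu2⟩
    have hL : 0 < 3*α*u.2 + κ*u.1 := by nlinarith
    rw [Real.exp_neg, Real.exp_add, Real.exp_log hu1, Real.exp_log hL]
    rw [one_div]
    congr 1
    ring
  have hG := logsum_strict_convex α κ hα hκ
  refine ⟨quadrant_convex, ?_⟩
  intro x hx y hy hxy a b ha hb hab
  have hz : a • x + b • y ∈ S := quadrant_convex hx hy ha.le hb.le hab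
  have hGlt := hG.2 hx hy hxy ha hb hab
  have hexp : Real.exp (-(Real.log (a • x + b • y).1
        + Real.log (3*α*(a • x + b • y).2 + κ*(a • x + b • y).1)))
      < a * Real.exp (-(Real.log x.1 + Real.log (3*α*x.2 + κ*x.1)))
        + b * Real.exp (-(Real.log y.1 + Real.log (3*α*y.2 + κ*y.1))) := by
    calc Real.exp (-(Real.log (a • x + b • y).1
          + Real.log (3*α*(a • x + b • y).2 + κ*(a • x + b • y).1)))
        < Real.exp (a * (-(Real.log x.1 + Real.log (3*α*x.2 + κ*x.1)))
          + b * (-(Real.log y.1 + Real.log (3*α*y.2 + κ*y.1)))) := by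
          apply Real.exp_lt_exp.mpr
          simpa [smul_eq_mul] using hGlt
      _ ≤ _ := by
          have := convexOn_exp.2 (Set.mem_univ (-(Real.log x.1 + Real.log (3*α*x.2 + κ*x.1))))
            (Set.mem_univ (-(Real.log y.1 + Real.log (3*α*y.2 + κ*y.1)))) ha.le hb.le hab
          simpa [smul_eq_mul] using this
  have e1 := key _ hz
  have e2 := key _ hx
  have e3 := key _ hy
  simp only [smul_eq_mul]
  rw [e1, e2, e3]
  have hz1 : (a • x + b • y).1 = a * x.1 + b * y.1 := by simp
  rw [hz1] at hexp ⊢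
  nlinarith [hexp]
end

section
/- Let α > 0, κ ≥ 0, and h₋, b₋, h₊, b₊ > 0. Then there exists exactly one pair (h*, b*) with h* > 0 and b* > 0 satisfying αh*b* + κ(h*)²/3 = αh₋b₋ + κh₋²/3 and b*/h* = b₊/h₊, namely h* = √(h₋h₊(3αb₋ + κh₋)/(3αb₊ + κh₊)) and b* = b₊√(h₋(3αb₋ + κh₋)/(h₊(3αb₊ + κh₊))). -/
/-- Existence and uniqueness of the intermediate state of the Riemann problem
for the thin-film system with gravity: there is exactly one pair `(h*, b*)`
with `h* > 0`, `b* > 0` such that `αh*b* + κ(h*)²/3 = αh₋b₋ + κh₋²/3` and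
`b*/h* = b₊/h₊`, and it is given by the explicit formulas. -/
theorem thin_film_intermediate_state
    (α κ hm bm hp bp : ℝ) (hα : 0 < α) (hκ : 0 ≤ κ)
    (hhm : 0 < hm) (hbm : 0 < bm) (hhp : 0 < hp) (hbp : 0 < bp) :
    ∀ hs bs : ℝ,
      (0 < hs ∧ 0 < bs ∧
        α*hs*bs + κ*hs^2/3 = α*hm*bm + κ*hm^2/3 ∧
        bs/hs = bp/hp) ↔
      (hs = Real.sqrt (hm*hp*(3*α*bm + κ*hm)/(3*α*bp + κ*hp)) ∧
        bs = bp * Real.sqrt (hm*(3*α*bm + κ*hm)/(hp*(3*α*bp + κ*hp)))) := by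
  intro hs bs
  have hA : 0 < 3*α*bm + κ*hm := by positivity
  have hB : 0 < 3*α*bp + κ*hp := by positivity
  set X := hm*hp*(3*α*bm + κ*hm)/(3*α*bp + κ*hp) with hX
  have hXpos : 0 < X := by positivity
  have hsq : Real.sqrt X ^ 2 = X := Real.sq_sqrt hXpos.le
  have hsp : 0 < Real.sqrt X := Real.sqrt_pos.mpr hXpos
  have hkey : hm*(3*α*bm + κ*hm)/(hp*(3*α*bp + κ*hp)) = X / hp^2 := by
    rw [hX]; field_simp
  have hbseq : bp * Real.sqrt (hm*(3*α*bm + κ*hm)/(hp*(3*α*bp + κ*hp)))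
      = bp * Real.sqrt X / hp := by
    rw [hkey, Real.sqrt_div hXpos.le, Real.sqrt_sq hhp.le, mul_div_assoc]
  constructor
  · rintro ⟨hhs, hbs, heq, hrat⟩
    have hbs' : bs = hs * bp / hp := by
      field_simp at hrat
      field_simp
      linarith
    have h2 : hs^2 = X := by
      rw [hbs'] at heq
      field_simp [hX] at heq ⊢
      rw [hX, eq_div_iff hB.ne']; linear_combination heq
    have hhs' : hs = Real.sqrt X := by rw [← h2, Real.sqrt_sq hhs.le]
    refine ⟨hhs', ?_⟩
    rw [hbseq, hbs', hhs']; ring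
  · rintro ⟨h1, h2⟩
    rw [hbseq] at h2
    subst h1 h2
    refine ⟨hsp, by positivity, ?_, by field_simp⟩
    have : α * Real.sqrt X * (bp * Real.sqrt X / hp) + κ * Real.sqrt X ^ 2 / 3
        = X * (3*α*bp + κ*hp) / (3*hp) := by
      have hm2 : Real.sqrt X * Real.sqrt X = X := Real.mul_self_sqrt hXpos.le
      field_simp
      linear_combination hsq
    rw [this, hX]
    field_simp
end

section
/- Let α, κ ≥ 0, let h_l > 0, b_l > 0 and h > 0, and set b = (b_l/h_l)·h and σ = (h + h_l)(αb + κh/3) + h_l(αb_l + κh_l/3). Then the Rankine–Hugoniot conditions hold: σ·(h − h_l) = f₁(h,b) − f₁(h_l,b_l) and σ·(b − b_l) = f₂(h,b) − f₂(h_l,b_l), where f₁(h,b) = αh²b + κh³/3 and f₂(h,b) = αhb² + κh²b/3. -/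
/-- The 2-shock of the thin-film system with gravity, connecting `(h_l, b_l)`
to `(h, b)` with `b = (b_l/h_l)·h` and speed
`σ = (h + h_l)(αb + κh/3) + h_l(αb_l + κh_l/3)`, satisfies the
Rankine–Hugoniot conditions in both components, with fluxes
`f₁ = αh²b + κh³/3` and `f₂ = αhb² + κh²b/3`. -/
theorem thin_film_shock_rankine_hugoniot
    (α κ hl bl h b σ : ℝ) (hα : 0 ≤ α) (hκ : 0 ≤ κ)
    (hhl : 0 < hl) (hbl : 0 < bl) (hh : 0 < h)
    (hb : b = (bl/hl) * h)
    (hσ : σ = (h + hl) * (α*b + κ*h/3) + hl * (α*bl + κ*hl/3)) :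
    σ * (h - hl) = (α*h^2*b + κ*h^3/3) - (α*hl^2*bl + κ*hl^3/3) ∧
    σ * (b - bl) = (α*h*b^2 + κ*h^2*b/3) - (α*hl*bl^2 + κ*hl^2*bl/3) := by
  have hl0 : hl ≠ 0 := hhl.ne'
  subst hb hσ
  constructor <;> field_simp <;> ring
end

section
/- Let α, κ ≥ 0 with α + κ > 0, let h_l > 0, b_l > 0, let 0 < h < h_l, set b = (b_l/h_l)·h, and let σ = (h + h_l)(αb + κh/3) + h_l(αb_l + κh_l/3). Then the Lax entropy inequalities for a 2-shock hold: 3αhb + κh² < σ < 3αh_lb_l + κh_l², and αh_lb_l + κh_l²/3 < σ; that is, λ₂(h,b) < σ < λ₂(h_l,b_l) and λ₁(h_l,b_l) < σ. -/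
/-- Lax entropy inequalities for the 2-shock of the thin-film system with
gravity: with `0 < h < h_l`, `b = (b_l/h_l)·h` and speed
`σ = (h + h_l)(αb + κh/3) + h_l(αb_l + κh_l/3)`, one has
`λ₂(h,b) < σ < λ₂(h_l,b_l)` and `λ₁(h_l,b_l) < σ`. -/
theorem thin_film_shock_lax_inequalities
    (α κ hl bl h b σ : ℝ) (hα : 0 ≤ α) (hκ : 0 ≤ κ) (hsum : 0 < α + κ)
    (hhl : 0 < hl) (hbl : 0 < bl) (hh : 0 < h) (hlt : h < hl)
    (hb : b = (bl/hl) * h)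
    (hσ : σ = (h + hl) * (α*b + κ*h/3) + hl * (α*bl + κ*hl/3)) :
    3*α*h*b + κ*h^2 < σ ∧ σ < 3*α*hl*bl + κ*hl^2 ∧
    α*hl*bl + κ*hl^2/3 < σ := by
  set r := bl / hl with hrdef
  have hr : 0 < r := div_pos hbl hhl
  have hbl' : bl = r * hl := by rw [hrdef, div_mul_cancel₀ bl hhl.ne']
  have hc : 0 < α * r + κ / 3 := by
    rcases hα.lt_or_eq with h1 | h1
    · have := mul_pos h1 hr; linarith
    · have : 0 < κ := by linarith
      nlinarith
  have hσ' : σ = (α * r + κ / 3) * (h^2 + h * hl + hl^2) := by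
    rw [hσ, hb, hbl']; ring
  refine ⟨?_, ?_, ?_⟩
  · rw [hσ', hb]
    nlinarith [mul_pos hh (sub_pos.mpr hlt), mul_pos hhl (sub_pos.mpr hlt),
      mul_pos hc (mul_pos hh (sub_pos.mpr hlt)),
      mul_pos hc (mul_pos hhl (sub_pos.mpr hlt))]
  · rw [hσ', hbl']
    nlinarith [mul_pos hc (mul_pos hh (sub_pos.mpr hlt)),
      mul_pos hc (mul_pos hhl (sub_pos.mpr hlt))]
  · rw [hσ', hbl']
    nlinarith [mul_pos hc (mul_pos hh hh), mul_pos hc (mul_pos hh hhl)]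
end

section
/- Let α, κ ≥ 0 and let (h_l, b_l) and (h, b) be states such that αh_lb_l + κh_l²/3 = αhb + κh²/3, and call this common value μ. Then the Rankine–Hugoniot conditions hold with speed μ: μ·(h − h_l) = f₁(h,b) − f₁(h_l,b_l) and μ·(b − b_l) = f₂(h,b) − f₂(h_l,b_l), where f₁(h,b) = αh²b + κh³/3 and f₂(h,b) = αhb² + κh²b/3; moreover μ = λ₁(h_l,b_l) = λ₁(h,b), so the discontinuity is a 1-contact discontinuity. -/
/-- Contact discontinuities of the thin-film system with gravity: if two
states share the same first Riemann invariant `w₁ = αhb + κh²/3`, with common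
value `μ`, then the Rankine–Hugoniot conditions hold with speed `μ`, and
`μ = λ₁(h_l,b_l) = λ₁(h,b)`, so the discontinuity is a 1-contact
discontinuity. -/
theorem thin_film_contact_discontinuity
    (α κ hl bl h b μ : ℝ) (hα : 0 ≤ α) (hκ : 0 ≤ κ)
    (hw : α*hl*bl + κ*hl^2/3 = α*h*b + κ*h^2/3)
    (hμ : μ = α*hl*bl + κ*hl^2/3) :
    μ * (h - hl) = (α*h^2*b + κ*h^3/3) - (α*hl^2*bl + κ*hl^3/3) ∧
    μ * (b - bl) = (α*h*b^2 + κ*h^2*b/3) - (α*hl*bl^2 + κ*hl^2*bl/3) ∧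
    μ = α*hl*bl + κ*hl^2/3 ∧ μ = α*h*b + κ*h^2/3 := by
  refine ⟨?_, ?_, hμ, hμ.trans hw⟩
  · linear_combination (h - hl) * hμ + h * hw
  · linear_combination (b - bl) * hμ + b * hw
end

section
/- Let α, κ ≥ 0 with α + κ > 0, let h₋, b₋, b₊ > 0, and set σ_δ = αh₋b₋ + κh₋²/3 and β(t) = b₊σ_δ·t. Then the delta shock connecting left state (h₋,b₋) to right state (0,b₊) with speed σ_δ and strength β satisfies the generalized Rankine–Hugoniot conditions and is overcompressive: (i) σ_δ·(0 − h₋) = f₁(0,b₊) − f₁(h₋,b₋); (ii) β'(t) = σ_δ·(b₊ − b₋) − (f₂(0,b₊) − f₂(h₋,b₋)) for all t ≥ 0; (iii) λ₁(0,b₊) = 0 < σ_δ = λ₁(h₋,b₋) < λ₂(h₋,b₋) = 3αh₋b₋ + κh₋². Here f₁(h,b) = αh²b + κh³/3 and f₂(h,b) = αhb² + κh²b/3. -/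
/-- The delta shock connecting `(h₋,b₋)` to `(0,b₊)` with speed
`σ_δ = αh₋b₋ + κh₋²/3` and strength `β(t) = b₊σ_δt` satisfies the generalized
Rankine–Hugoniot conditions of the thin-film system with gravity and is
overcompressive: `λ₁(0,b₊) = 0 < σ_δ = λ₁(h₋,b₋) < λ₂(h₋,b₋)`. Here
`f₁(h,b) = αh²b + κh³/3` and `f₂(h,b) = αhb² + κh²b/3`. -/
theorem thin_film_delta_shock_generalized_RH
    (α κ hm bm bp σ : ℝ) (hα : 0 ≤ α) (hκ : 0 ≤ κ) (hsum : 0 < α + κ)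
    (hhm : 0 < hm) (hbm : 0 < bm) (hbp : 0 < bp)
    (hσ : σ = α*hm*bm + κ*hm^2/3) :
    σ * (0 - hm) = (α*0^2*bp + κ*0^3/3) - (α*hm^2*bm + κ*hm^3/3) ∧
    (∀ t : ℝ, 0 ≤ t → HasDerivAt (fun s => bp * σ * s)
      (σ * (bp - bm) - ((α*0*bp^2 + κ*0^2*bp/3) - (α*hm*bm^2 + κ*hm^2*bm/3))) t) ∧
    (α*0*bp + κ*0^2/3 = 0 ∧ 0 < σ ∧ σ = α*hm*bm + κ*hm^2/3 ∧
      σ < 3*α*hm*bm + κ*hm^2) := by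
  have hσpos : 0 < σ := by
    subst hσ
    rcases lt_or_ge 0 α with h | h
    · nlinarith [mul_pos hhm hbm, sq_nonneg hm]
    · have hκpos : 0 < κ := by linarith
      nlinarith [mul_pos hhm hbm, pow_pos hhm 2]
  refine ⟨by subst hσ; ring, fun t _ => ?_, by ring, hσpos, hσ, by nlinarith [mul_pos hhm hbm, pow_pos hhm 2]⟩
  have h1 : σ * (bp - bm) - ((α*0*bp^2 + κ*0^2*bp/3) - (α*hm*bm^2 + κ*hm^2*bm/3)) = bp * σ := by
    subst hσ; ring
  rw [h1]
  simpa using (hasDerivAt_id t).const_mul (bp * σ)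
end

section
/- Let α, κ ≥ 0, let h₋, b₋, b₊ > 0, and set σ = αh₋b₋ + κh₋²/3. Define piecewise-constant functions on ℝ × (0,∞) by h̄(x,t) = h₋ if x < σt and 0 otherwise, b̄(x,t) = b₋ if x < σt and b₊ otherwise, and φ̄(x,t) = αh̄(x,t)b̄(x,t) + κh̄(x,t)²/3 (so φ̄ = σ for x < σt and φ̄ = 0 for x > σt). Then for every smooth φ : ℝ × ℝ → ℝ with compact support contained in ℝ × (0,∞): ∫₀^∞∫_ℝ (h̄·∂ₜφ + h̄·φ̄·∂ₓφ) dx dt = 0 and ∫₀^∞∫_ℝ (b̄·∂ₜφ + b̄·φ̄·∂ₓφ) dx dt + ∫₀^∞ b₊σt · (d/dt)[φ(σt, t)] dt = 0; that is, the delta shock with speed σ and strength β(t) = b₊σt is a weak (measure-valued) solution of the thin-film system with gravity. -/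
open MeasureTheory Set Filter

private lemma tf_integral_deriv_zero {f : ℝ → ℝ}
    (hf : ContDiff ℝ 1 f) (hc : HasCompactSupport f) :
    ∫ t : ℝ, deriv f t = 0 :=
  integral_eq_zero_of_hasDerivAt_of_integrable
    (fun x => (hf.differentiable one_ne_zero x).hasDerivAt)
    ((hf.continuous_deriv le_rfl).integrable_of_hasCompactSupport hc.deriv)
    (hf.continuous.integrable_of_hasCompactSupport hc)

private lemma tf_hcs_slice_t {f : ℝ × ℝ → ℝ} (hc : HasCompactSupport f) (g : ℝ → ℝ) :
    HasCompactSupport fun s => f (g s, s) := by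
  have hK : IsCompact (Prod.snd '' tsupport f) := (hc : IsCompact _).image continuous_snd
  apply HasCompactSupport.intro hK
  intro s hs
  by_contra h
  exact hs ⟨(g s, s), subset_tsupport _ (Function.mem_support.mpr h), rfl⟩

private lemma tf_hcs_slice_x {f : ℝ × ℝ → ℝ} (hc : HasCompactSupport f) (t : ℝ) :
    HasCompactSupport fun y => f (y, t) := by
  have hK : IsCompact (Prod.fst '' tsupport f) := (hc : IsCompact _).image continuous_fst
  apply HasCompactSupport.intro hK
  intro y hy
  by_contra h
  exact hy ⟨(y, t), subset_tsupport _ (Function.mem_support.mpr h), rfl⟩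

private lemma tf_shift_Iio (g : ℝ → ℝ) (c : ℝ) :
    ∫ x in Set.Iio c, g x = ∫ y in Set.Iio (0:ℝ), g (y + c) := by
  have h := (measurePreserving_add_right volume c).setIntegral_preimage_emb
    (measurableEmbedding_addRight c) g (Set.Iio c)
  have hpre : (fun y : ℝ => y + c) ⁻¹' Set.Iio c = Set.Iio 0 := by
    ext y; simp
  rw [hpre] at h
  exact h.symm

private lemma tf_shift_Ici (g : ℝ → ℝ) (c : ℝ) :
    ∫ x in Set.Ici c, g x = ∫ y in Set.Ici (0:ℝ), g (y + c) := by
  have h := (measurePreserving_add_right volume c).setIntegral_preimage_emb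
    (measurableEmbedding_addRight c) g (Set.Ici c)
  have hpre : (fun y : ℝ => y + c) ⁻¹' Set.Ici c = Set.Ici 0 := by
    ext y; simp
  rw [hpre] at h
  exact h.symm

/-- The delta shock with speed `σ = αh₋b₋ + κh₋²/3` and strength
`β(t) = b₊σt` is a weak (measure-valued) solution of the thin-film system
with gravity: for every smooth test function compactly supported in
`ℝ × (0,∞)`, the two distributional identities hold, the Dirac contribution
appearing in the `b`-component. -/
theorem thin_film_delta_shock_weak_solution
    (α κ hm bm bp σ : ℝ) (hα : 0 ≤ α) (hκ : 0 ≤ κ)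
    (hhm : 0 < hm) (hbm : 0 < bm) (hbp : 0 < bp)
    (hσ : σ = α*hm*bm + κ*hm^2/3)
    (hbar bbar fbar : ℝ → ℝ → ℝ)
    (hhbar : ∀ x t : ℝ, hbar x t = if x < σ*t then hm else 0)
    (hbbar : ∀ x t : ℝ, bbar x t = if x < σ*t then bm else bp)
    (hfbar : ∀ x t : ℝ, fbar x t = α * hbar x t * bbar x t + κ * (hbar x t)^2/3)
    (φ : ℝ × ℝ → ℝ) (hφ : ContDiff ℝ (⊤ : ℕ∞) φ) (hcs : HasCompactSupport φ)
    (hsupp : tsupport φ ⊆ {p : ℝ × ℝ | 0 < p.2}) :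
    (∫ t in Set.Ioi (0:ℝ), ∫ x : ℝ,
        (hbar x t * deriv (fun s => φ (x, s)) t
          + hbar x t * fbar x t * deriv (fun y => φ (y, t)) x)) = 0 ∧
    (∫ t in Set.Ioi (0:ℝ), ∫ x : ℝ,
        (bbar x t * deriv (fun s => φ (x, s)) t
          + bbar x t * fbar x t * deriv (fun y => φ (y, t)) x))
      + (∫ t in Set.Ioi (0:ℝ), bp * σ * t * deriv (fun s => φ (σ*s, s)) t)
      = 0 := by
  classical
  have hφ1 : ContDiff ℝ 1 φ := hφ.of_le (by simp)
  set D1 : ℝ × ℝ → ℝ := fun p => fderiv ℝ φ p (1, 0) with hD1def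
  set D2 : ℝ × ℝ → ℝ := fun p => fderiv ℝ φ p (0, 1) with hD2def
  set G : ℝ × ℝ → ℝ := fun p => fderiv ℝ φ p (σ, 1) with hGdef
  have hfderiv_cont : Continuous (fderiv ℝ φ) := hφ.continuous_fderiv (by simp)
  have hD1c : Continuous D1 := hfderiv_cont.clm_apply continuous_const
  have hD2c : Continuous D2 := hfderiv_cont.clm_apply continuous_const
  have hGc : Continuous G := hfderiv_cont.clm_apply continuous_const
  have hD1cs : HasCompactSupport D1 := hcs.fderiv_apply ℝ (1, 0)
  have hD2cs : HasCompactSupport D2 := hcs.fderiv_apply ℝ (0, 1)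
  have hGcs : HasCompactSupport G := hcs.fderiv_apply ℝ (σ, 1)
  -- slice derivatives
  have sliceT : ∀ x t : ℝ, HasDerivAt (fun s => φ (x, s)) (D2 (x, t)) t := by
    intro x t
    have hcurve : HasDerivAt (fun s : ℝ => ((x : ℝ), s)) (((0 : ℝ), (1 : ℝ))) t :=
      (hasDerivAt_const t x).prodMk (hasDerivAt_id t)
    exact ((hφ1.differentiable one_ne_zero (x, t)).hasFDerivAt).comp_hasDerivAt_of_eq t hcurve rfl
  have sliceX : ∀ x t : ℝ, HasDerivAt (fun y => φ (y, t)) (D1 (x, t)) x := by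
    intro x t
    have hcurve : HasDerivAt (fun y : ℝ => (y, (t : ℝ))) (((1 : ℝ), (0 : ℝ))) x :=
      (hasDerivAt_id x).prodMk (hasDerivAt_const x t)
    exact ((hφ1.differentiable one_ne_zero (x, t)).hasFDerivAt).comp_hasDerivAt_of_eq x hcurve rfl
  have sliceC : ∀ y t : ℝ, HasDerivAt (fun s => φ (y + σ * s, s)) (G (y + σ * t, t)) t := by
    intro y t
    have h1 : HasDerivAt (fun s : ℝ => y + σ * s) σ t := by
      simpa using ((hasDerivAt_id t).const_mul σ).const_add y
    have hcurve : HasDerivAt (fun s : ℝ => (y + σ * s, s)) (((σ : ℝ), (1 : ℝ))) t :=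
      h1.prodMk (hasDerivAt_id t)
    exact ((hφ1.differentiable one_ne_zero ((y + σ * t, t) : ℝ × ℝ)).hasFDerivAt).comp_hasDerivAt_of_eq
      t hcurve rfl
  -- linearity of the differential
  have hGlin : ∀ p : ℝ × ℝ, G p = σ * D1 p + D2 p := by
    intro p
    have h1 : ((σ : ℝ), (1 : ℝ)) = σ • ((1 : ℝ), (0 : ℝ)) + ((0 : ℝ), (1 : ℝ)) := by
      simp [Prod.ext_iff]
    simp only [hGdef, hD1def, hD2def, h1, map_add, ContinuousLinearMap.map_smul, smul_eq_mul]
  -- the support is away from t = 0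
  obtain ⟨ε, hε, hεz⟩ : ∃ ε > 0, ∀ p : ℝ × ℝ, p.2 < ε → φ p = 0 := by
    rcases (tsupport φ).eq_empty_or_nonempty with h | h
    · exact ⟨1, one_pos, fun p _ => image_eq_zero_of_notMem_tsupport (by simp [h])⟩
    · have hK : IsCompact (tsupport φ) := hcs
      obtain ⟨p₀, hp₀, hmin⟩ := hK.exists_isMinOn h continuous_snd.continuousOn
      refine ⟨p₀.2, hsupp hp₀, fun p hp => image_eq_zero_of_notMem_tsupport fun hmem => ?_⟩
      exact absurd (isMinOn_iff.mp hmin p hmem) (not_le.mpr hp)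
  have deriv_zero_small : ∀ (h : ℝ → ℝ) (t : ℝ), t < ε → (∀ s, s < ε → h s = 0) →
      deriv h t = 0 := by
    intro h t ht hh
    have heq : h =ᶠ[nhds t] fun _ => (0 : ℝ) :=
      Filter.eventuallyEq_of_mem (Iio_mem_nhds ht) fun s hs => hh s hs
    rw [heq.deriv_eq]
    simp
  -- smoothness of the sheared slices
  have contDiff_curve : ∀ y : ℝ, ContDiff ℝ 1 (fun s => φ (y + σ * s, s)) := fun y =>
    hφ1.comp ((contDiff_const.add (contDiff_const.mul contDiff_id)).prodMk contDiff_id)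
  -- key Fubini lemma
  have key : ∀ S : Set ℝ, MeasurableSet S →
      Integrable (fun t : ℝ => ∫ y in S, G (y + σ * t, t)) volume ∧
      (∫ t in Set.Ioi (0:ℝ), ∫ y in S, G (y + σ * t, t)) = 0 := by
    intro S hS
    let e : ℝ × ℝ ≃ₜ ℝ × ℝ :=
      { toFun := fun q => (q.2 + σ * q.1, q.1)
        invFun := fun p => (p.2, p.1 - σ * p.2)
        left_inv := fun q => by simp [Prod.ext_iff]
        right_inv := fun p => by simp [Prod.ext_iff]
        continuous_toFun := by fun_prop
        continuous_invFun := by fun_prop }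
    have hH : HasCompactSupport (G ∘ e) :=
      hGcs.comp_homeomorph e
    have h1 : Integrable (fun q : ℝ × ℝ => G (q.2 + σ * q.1, q.1)) volume :=
      (hGc.comp e.continuous).integrable_of_hasCompactSupport hH
    have h2 : volume.prod (volume.restrict S)
        = (volume : Measure (ℝ × ℝ)).restrict (Set.univ ×ˢ S) := by
      rw [MeasureTheory.Measure.volume_eq_prod, ← Measure.prod_restrict, Measure.restrict_univ]
    have hHint : Integrable (fun q : ℝ × ℝ => G (q.2 + σ * q.1, q.1))
        (volume.prod (volume.restrict S)) := by
      rw [h2]; exact h1.restrict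
    have hAint : Integrable (fun t : ℝ => ∫ y in S, G (y + σ * t, t)) volume :=
      hHint.integral_prod_left
    refine ⟨hAint, ?_⟩
    have hinner : ∀ y : ℝ, (∫ t : ℝ, G (y + σ * t, t)) = 0 := by
      intro y
      have hd : (fun t : ℝ => G (y + σ * t, t)) = deriv (fun s => φ (y + σ * s, s)) := by
        funext t; exact ((sliceC y t).deriv).symm
      rw [hd]
      exact tf_integral_deriv_zero (contDiff_curve y) (tf_hcs_slice_t hcs _)
    have hext : (∫ t in Set.Ioi (0:ℝ), ∫ y in S, G (y + σ * t, t))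
        = ∫ t : ℝ, ∫ y in S, G (y + σ * t, t) := by
      apply setIntegral_eq_integral_of_forall_compl_eq_zero
      intro t ht
      have ht' : t < ε := lt_of_le_of_lt (not_lt.mp (by simpa using ht)) hε
      have hz : ∀ y : ℝ, G (y + σ * t, t) = 0 := by
        intro y
        rw [← (sliceC y t).deriv]
        exact deriv_zero_small (fun s => φ (y + σ * s, s)) t ht' fun s hs => hεz _ hs
      simp [hz]
    have hswap := MeasureTheory.integral_integral_swap
      (f := fun t y => G (y + σ * t, t)) hHint
    rw [hext, hswap]
    simp [hinner]
  -- pointwise integrable slices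
  have hGint_t : ∀ t : ℝ, Integrable (fun x => G (x, t)) volume := fun t =>
    (hGc.comp (continuous_id.prodMk continuous_const)).integrable_of_hasCompactSupport
      (tf_hcs_slice_x hGcs t)
  have hD2int_t : ∀ t : ℝ, Integrable (fun x => D2 (x, t)) volume := fun t =>
    (hD2c.comp (continuous_id.prodMk continuous_const)).integrable_of_hasCompactSupport
      (tf_hcs_slice_x hD2cs t)
  have hD1int_t : ∀ t : ℝ, Integrable (fun x => D1 (x, t)) volume := fun t =>
    (hD1c.comp (continuous_id.prodMk continuous_const)).integrable_of_hasCompactSupport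
      (tf_hcs_slice_x hD1cs t)
  -- the h-equation inner integral
  have claimH : ∀ t : ℝ,
      (∫ x : ℝ, (hbar x t * deriv (fun s => φ (x, s)) t
        + hbar x t * fbar x t * deriv (fun y => φ (y, t)) x))
      = hm * ∫ y in Set.Iio (0:ℝ), G (y + σ * t, t) := by
    intro t
    have hptw : ∀ x : ℝ, (hbar x t * deriv (fun s => φ (x, s)) t
        + hbar x t * fbar x t * deriv (fun y => φ (y, t)) x)
        = Set.indicator (Set.Iio (σ * t)) (fun x => hm * G (x, t)) x := by
      intro x
      rw [(sliceT x t).deriv, (sliceX x t).deriv]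
      by_cases hx : x < σ * t
      · rw [Set.indicator_of_mem (show x ∈ Set.Iio (σ * t) from hx)]
        simp only [hfbar, hhbar, hbbar, if_pos hx]
        rw [hGlin (x, t), ← hσ]
        ring
      · rw [Set.indicator_of_notMem (show x ∉ Set.Iio (σ * t) from hx)]
        simp [hhbar, if_neg hx]
    have h1 : (∫ x : ℝ, (hbar x t * deriv (fun s => φ (x, s)) t
        + hbar x t * fbar x t * deriv (fun y => φ (y, t)) x))
        = ∫ x : ℝ, Set.indicator (Set.Iio (σ * t)) (fun x => hm * G (x, t)) x :=
      integral_congr_ae (Eventually.of_forall hptw)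
    rw [h1, integral_indicator measurableSet_Iio, integral_const_mul,
      tf_shift_Iio (fun x => G (x, t)) (σ * t)]
  -- the b-equation inner integral
  have IciD2 : ∀ t : ℝ, (∫ x in Set.Ici (σ * t), D2 (x, t))
      = (∫ y in Set.Ici (0:ℝ), G (y + σ * t, t)) + σ * φ (σ * t, t) := by
    intro t
    have hD1Ici : (∫ x in Set.Ici (σ * t), D1 (x, t)) = - φ (σ * t, t) := by
      rw [integral_Ici_eq_integral_Ioi]
      have hx : ∀ x : ℝ, D1 (x, t) = deriv (fun y => φ (y, t)) x :=
        fun x => ((sliceX x t).deriv).symm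
      simp_rw [hx]
      exact HasCompactSupport.integral_Ioi_deriv_eq
        (hφ1.comp (contDiff_id.prodMk contDiff_const)) (tf_hcs_slice_x hcs t) (σ * t)
    have hsub : (∫ x in Set.Ici (σ * t), D2 (x, t))
        = (∫ x in Set.Ici (σ * t), G (x, t)) - σ * ∫ x in Set.Ici (σ * t), D1 (x, t) := by
      rw [← integral_const_mul, ← integral_sub ((hGint_t t).integrableOn)
        (((hD1int_t t).const_mul σ).integrableOn)]
      apply setIntegral_congr_fun measurableSet_Ici
      intro x _
      show D2 (x, t) = G (x, t) - σ * D1 (x, t)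
      rw [hGlin (x, t)]
      ring
    rw [hsub, hD1Ici, tf_shift_Ici (fun x => G (x, t)) (σ * t)]
    ring
  have claimB : ∀ t : ℝ,
      (∫ x : ℝ, (bbar x t * deriv (fun s => φ (x, s)) t
        + bbar x t * fbar x t * deriv (fun y => φ (y, t)) x))
      = bm * (∫ y in Set.Iio (0:ℝ), G (y + σ * t, t))
        + (bp * (∫ y in Set.Ici (0:ℝ), G (y + σ * t, t)) + bp * σ * φ (σ * t, t)) := by
    intro t
    have hptw : ∀ x : ℝ, (bbar x t * deriv (fun s => φ (x, s)) t
        + bbar x t * fbar x t * deriv (fun y => φ (y, t)) x)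
        = Set.indicator (Set.Iio (σ * t)) (fun x => bm * G (x, t)) x
          + Set.indicator (Set.Iio (σ * t))ᶜ (fun x => bp * D2 (x, t)) x := by
      intro x
      rw [(sliceT x t).deriv, (sliceX x t).deriv]
      by_cases hx : x < σ * t
      · rw [Set.indicator_of_mem (show x ∈ Set.Iio (σ * t) from hx), Set.indicator_of_notMem (by simpa using hx)]
        simp only [hfbar, hhbar, hbbar, if_pos hx]
        rw [hGlin (x, t), ← hσ]
        ring
      · rw [Set.indicator_of_notMem (show x ∉ Set.Iio (σ * t) from hx), Set.indicator_of_mem (by simpa using hx)]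
        simp only [hfbar, hhbar, hbbar, if_neg hx]
        ring
    have h1 : (∫ x : ℝ, (bbar x t * deriv (fun s => φ (x, s)) t
        + bbar x t * fbar x t * deriv (fun y => φ (y, t)) x))
        = ∫ x : ℝ, (Set.indicator (Set.Iio (σ * t)) (fun x => bm * G (x, t)) x
          + Set.indicator (Set.Iio (σ * t))ᶜ (fun x => bp * D2 (x, t)) x) :=
      integral_congr_ae (Eventually.of_forall hptw)
    rw [h1, integral_add (((hGint_t t).const_mul bm).indicator measurableSet_Iio)
      (((hD2int_t t).const_mul bp).indicator measurableSet_Iio.compl),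
      integral_indicator measurableSet_Iio, integral_indicator measurableSet_Iio.compl,
      compl_Iio, integral_const_mul, integral_const_mul,
      tf_shift_Iio (fun x => G (x, t)) (σ * t), IciD2 t]
    ring
  -- the integration-by-parts identity for the Dirac term
  have parts : (∫ t in Set.Ioi (0:ℝ), bp * σ * φ (σ * t, t))
      + (∫ t in Set.Ioi (0:ℝ), bp * σ * t * deriv (fun s => φ (σ * s, s)) t) = 0 := by
    set g : ℝ → ℝ := fun s => φ (σ * s, s) with hgdef
    have hg : ContDiff ℝ 1 g := hφ1.comp ((contDiff_const.mul contDiff_id).prodMk contDiff_id)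
    have hgcs : HasCompactSupport g := tf_hcs_slice_t hcs fun s => σ * s
    have hdg_cont : Continuous (deriv g) := hg.continuous_deriv le_rfl
    have hgder : ∀ t : ℝ, HasDerivAt (fun s => s * g s) (g t + t * deriv g t) t := by
      intro t
      have h := (hasDerivAt_id' t).mul ((hg.differentiable one_ne_zero t).hasDerivAt)
      exact h.congr_deriv (by ring)
    have hint_g : Integrable g volume := hg.continuous.integrable_of_hasCompactSupport hgcs
    have hint_tdg : Integrable (fun t : ℝ => t * deriv g t) volume := by
      apply (continuous_id.mul hdg_cont).integrable_of_hasCompactSupport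
      exact (hgcs.deriv).mul_left
    have hint_tg : Integrable (fun t : ℝ => t * g t) volume := by
      apply (continuous_id.mul hg.continuous).integrable_of_hasCompactSupport
      exact hgcs.mul_left
    have hzero : (∫ t : ℝ, (g t + t * deriv g t)) = 0 :=
      integral_eq_zero_of_hasDerivAt_of_integrable hgder (hint_g.add hint_tdg) hint_tg
    have hIoi : (∫ t in Set.Ioi (0:ℝ), (g t + t * deriv g t))
        = ∫ t : ℝ, (g t + t * deriv g t) := by
      apply setIntegral_eq_integral_of_forall_compl_eq_zero
      intro t ht
      have ht' : t < ε := lt_of_le_of_lt (not_lt.mp (by simpa using ht)) hε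
      have h1 : g t = 0 := hεz (σ * t, t) ht'
      have h2 : deriv g t = 0 :=
        deriv_zero_small g t ht' fun s hs => hεz (σ * s, s) hs
      simp [h1, h2]
    have hsplit : (∫ t in Set.Ioi (0:ℝ), g t) + (∫ t in Set.Ioi (0:ℝ), t * deriv g t) = 0 := by
      rw [← integral_add hint_g.integrableOn hint_tdg.integrableOn, hIoi, hzero]
    have e1 : (∫ t in Set.Ioi (0:ℝ), bp * σ * φ (σ * t, t))
        = bp * σ * ∫ t in Set.Ioi (0:ℝ), g t := by
      rw [← integral_const_mul]
    have e2 : (∫ t in Set.Ioi (0:ℝ), bp * σ * t * deriv (fun s => φ (σ * s, s)) t)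
        = bp * σ * ∫ t in Set.Ioi (0:ℝ), t * deriv g t := by
      rw [← integral_const_mul]
      apply setIntegral_congr_fun measurableSet_Ioi
      intro t _
      rw [hgdef]
      ring
    rw [e1, e2, ← mul_add, hsplit, mul_zero]
  constructor
  · simp only [claimH]
    rw [integral_const_mul, (key (Set.Iio 0) measurableSet_Iio).2, mul_zero]
  · simp only [claimB]
    have hIio := key (Set.Iio 0) measurableSet_Iio
    have hIci := key (Set.Ici 0) measurableSet_Ici
    have hgint : Integrable (fun t : ℝ => bp * σ * φ (σ * t, t)) volume := by
      apply Integrable.const_mul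
      exact (hφ1.continuous.comp (by fun_prop)).integrable_of_hasCompactSupport
        (tf_hcs_slice_t hcs fun s => σ * s)
    have hA : Integrable (fun t : ℝ => bm * ∫ y in Set.Iio (0:ℝ), G (y + σ * t, t)) volume :=
      hIio.1.const_mul bm
    have hB : Integrable (fun t : ℝ => bp * ∫ y in Set.Ici (0:ℝ), G (y + σ * t, t)) volume :=
      hIci.1.const_mul bp
    have hBC : Integrable (fun t : ℝ =>
        bp * (∫ y in Set.Ici (0:ℝ), G (y + σ * t, t)) + bp * σ * φ (σ * t, t)) volume :=
      hB.add hgint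
    have split1 : (∫ t in Set.Ioi (0:ℝ),
        (bm * (∫ y in Set.Iio (0:ℝ), G (y + σ * t, t))
          + (bp * (∫ y in Set.Ici (0:ℝ), G (y + σ * t, t)) + bp * σ * φ (σ * t, t))))
        = (∫ t in Set.Ioi (0:ℝ), bm * ∫ y in Set.Iio (0:ℝ), G (y + σ * t, t))
          + ∫ t in Set.Ioi (0:ℝ),
            (bp * (∫ y in Set.Ici (0:ℝ), G (y + σ * t, t)) + bp * σ * φ (σ * t, t)) :=
      integral_add hA.integrableOn hBC.integrableOn
    have split2 : (∫ t in Set.Ioi (0:ℝ),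
        (bp * (∫ y in Set.Ici (0:ℝ), G (y + σ * t, t)) + bp * σ * φ (σ * t, t)))
        = (∫ t in Set.Ioi (0:ℝ), bp * ∫ y in Set.Ici (0:ℝ), G (y + σ * t, t))
          + ∫ t in Set.Ioi (0:ℝ), bp * σ * φ (σ * t, t) :=
      integral_add hB.integrableOn hgint.integrableOn
    rw [split1, split2, integral_const_mul, integral_const_mul, hIio.2, hIci.2,
      mul_zero, mul_zero, zero_add, zero_add]
    exact parts
end

section
/- Let α > 0, κ ≥ 0, and h₋, b₋, b₊ > 0. For h₊ > 0 define h*(h₊) = √(h₋h₊(3αb₋ + κh₋)/(3αb₊ + κh₊)) and b*(h₊) = b₊√(h₋(3αb₋ + κh₋)/(h₊(3αb₊ + κh₊))). Then, in the limit h₊ → 0 from the right: h*(h₊) tends to 0, b*(h₊) tends to +∞, and the contact speed αh*(h₊)b*(h₊) + κh*(h₊)²/3 tends to αh₋b₋ + κh₋²/3 (the delta shock speed). -/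
open Filter Topology

/-- Degeneration of the intermediate state of the Riemann problem for the
thin-film system with gravity as the right film height `h₊ → 0⁺`:
`h* → 0`, `b* → +∞`, and the contact speed `αh*b* + κ(h*)²/3` tends to the
delta shock speed `αh₋b₋ + κh₋²/3`. -/
theorem thin_film_intermediate_state_vanishing_right_height
    (α κ hm bm bp : ℝ) (hα : 0 < α) (hκ : 0 ≤ κ)
    (hhm : 0 < hm) (hbm : 0 < bm) (hbp : 0 < bp)
    (hstar bstar : ℝ → ℝ)
    (hhstar : ∀ hp : ℝ, hstar hp =
      Real.sqrt (hm*hp*(3*α*bm + κ*hm)/(3*α*bp + κ*hp)))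
    (hbstar : ∀ hp : ℝ, bstar hp =
      bp * Real.sqrt (hm*(3*α*bm + κ*hm)/(hp*(3*α*bp + κ*hp)))) :
    Tendsto hstar (nhdsWithin 0 (Set.Ioi 0)) (nhds 0) ∧
    Tendsto bstar (nhdsWithin 0 (Set.Ioi 0)) atTop ∧
    Tendsto (fun hp => α * hstar hp * bstar hp + κ * (hstar hp)^2/3)
      (nhdsWithin 0 (Set.Ioi 0)) (nhds (α*hm*bm + κ*hm^2/3)) := by
  have hCpos : 0 < 3*α*bm + κ*hm := by positivity
  have hDpos : 0 < 3*α*bp := by positivity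
  have hDne : (3*α*bp) ≠ 0 := ne_of_gt hDpos
  -- denominator tendsto
  have hD : Tendsto (fun hp : ℝ => 3*α*bp + κ*hp) (𝓝[>] (0:ℝ)) (𝓝 (3*α*bp)) := by
    have : Tendsto (fun hp : ℝ => 3*α*bp + κ*hp) (𝓝 0) (𝓝 (3*α*bp + κ*0)) :=
      (continuous_const.add (continuous_const.mul continuous_id)).tendsto 0
    simpa using this.mono_left nhdsWithin_le_nhds
  -- inner argument of sqrt in hstar tends to 0
  have hinner : Tendsto (fun hp : ℝ => hm*hp*(3*α*bm + κ*hm)/(3*α*bp + κ*hp))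
      (𝓝[>] (0:ℝ)) (𝓝 0) := by
    have hnum : Tendsto (fun hp : ℝ => hm*hp*(3*α*bm + κ*hm)) (𝓝[>] (0:ℝ)) (𝓝 0) := by
      have : Tendsto (fun hp : ℝ => hm*hp*(3*α*bm + κ*hm)) (𝓝 0) (𝓝 (hm*0*(3*α*bm + κ*hm))) :=
        ((continuous_const.mul continuous_id).mul continuous_const).tendsto 0
      simpa using this.mono_left nhdsWithin_le_nhds
    have := hnum.div hD hDne
    rw [zero_div] at this
    exact this
  -- part 1
  have h1 : Tendsto hstar (𝓝[>] (0:ℝ)) (𝓝 0) := by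
    have := (Real.continuous_sqrt.tendsto 0).comp hinner
    simp only [Real.sqrt_zero] at this
    exact this.congr fun hp => (hhstar hp).symm
  -- part 2
  have hg : Tendsto (fun hp : ℝ => hp*(3*α*bp + κ*hp)) (𝓝[>] (0:ℝ)) (𝓝[>] (0:ℝ)) := by
    apply tendsto_nhdsWithin_of_tendsto_nhds_of_eventually_within
    · have : Tendsto (fun hp : ℝ => hp*(3*α*bp + κ*hp)) (𝓝 0) (𝓝 (0*(3*α*bp + κ*0))) :=
        (continuous_id.mul (continuous_const.add (continuous_const.mul continuous_id))).tendsto 0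
      simpa using this.mono_left nhdsWithin_le_nhds
    · filter_upwards [self_mem_nhdsWithin] with hp hhp
      have : 0 < 3*α*bp + κ*hp :=
        add_pos_of_pos_of_nonneg hDpos (mul_nonneg hκ (le_of_lt hhp))
      exact mul_pos hhp this
  have hginv : Tendsto (fun hp : ℝ => (hp*(3*α*bp + κ*hp))⁻¹) (𝓝[>] (0:ℝ)) atTop :=
    hg.inv_tendsto_nhdsGT_zero
  have h2 : Tendsto bstar (𝓝[>] (0:ℝ)) atTop := by
    have hmulC : Tendsto (fun hp : ℝ => (hm*(3*α*bm + κ*hm)) * (hp*(3*α*bp + κ*hp))⁻¹)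
        (𝓝[>] (0:ℝ)) atTop := hginv.const_mul_atTop (by positivity)
    have hsqrt : Tendsto (fun hp : ℝ =>
        Real.sqrt (hm*(3*α*bm + κ*hm)/(hp*(3*α*bp + κ*hp)))) (𝓝[>] (0:ℝ)) atTop := by
      have hsqrtTop : Tendsto Real.sqrt atTop atTop := by
        have h := tendsto_rpow_atTop (by norm_num : (0:ℝ) < 1/2)
        refine h.congr fun x => ?_
        rw [Real.sqrt_eq_rpow]
      have := hsqrtTop.comp hmulC
      refine this.congr fun hp => ?_
      simp [Function.comp, div_eq_mul_inv]
    have := hsqrt.const_mul_atTop hbp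
    exact this.congr fun hp => (hbstar hp).symm
  refine ⟨h1, h2, ?_⟩
  -- part 3
  have heq : ∀ᶠ hp in 𝓝[>] (0:ℝ),
      α * (bp * (hm*(3*α*bm + κ*hm)/(3*α*bp + κ*hp)))
        + κ * (hm*hp*(3*α*bm + κ*hm)/(3*α*bp + κ*hp))/3
      = α * hstar hp * bstar hp + κ * (hstar hp)^2/3 := by
    filter_upwards [self_mem_nhdsWithin] with hp hhp
    have hhp' : (0:ℝ) < hp := hhp
    have hDp : 0 < 3*α*bp + κ*hp :=
      add_pos_of_pos_of_nonneg hDpos (mul_nonneg hκ hhp'.le)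
    have harg1 : 0 ≤ hm*hp*(3*α*bm + κ*hm)/(3*α*bp + κ*hp) := by positivity
    have hsq : (hstar hp)^2 = hm*hp*(3*α*bm + κ*hm)/(3*α*bp + κ*hp) := by
      rw [hhstar hp, Real.sq_sqrt harg1]
    have hprod : hstar hp * bstar hp = bp * (hm*(3*α*bm + κ*hm)/(3*α*bp + κ*hp)) := by
      rw [hhstar hp, hbstar hp]
      have hmul := (Real.sqrt_mul harg1 (hm*(3*α*bm + κ*hm)/(hp*(3*α*bp + κ*hp)))).symm
      have hval : hm*hp*(3*α*bm + κ*hm)/(3*α*bp + κ*hp)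
          * (hm*(3*α*bm + κ*hm)/(hp*(3*α*bp + κ*hp)))
          = (hm*(3*α*bm + κ*hm)/(3*α*bp + κ*hp))^2 := by
        field_simp
      calc Real.sqrt (hm*hp*(3*α*bm + κ*hm)/(3*α*bp + κ*hp))
            * (bp * Real.sqrt (hm*(3*α*bm + κ*hm)/(hp*(3*α*bp + κ*hp))))
          = bp * (Real.sqrt (hm*hp*(3*α*bm + κ*hm)/(3*α*bp + κ*hp))
            * Real.sqrt (hm*(3*α*bm + κ*hm)/(hp*(3*α*bp + κ*hp)))) := by ring
        _ = bp * Real.sqrt ((hm*(3*α*bm + κ*hm)/(3*α*bp + κ*hp))^2) := by rw [hmul, hval]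
        _ = bp * (hm*(3*α*bm + κ*hm)/(3*α*bp + κ*hp)) := by
            rw [Real.sqrt_sq (by positivity)]
    rw [hsq, mul_assoc α (hstar hp) (bstar hp), hprod]
  have h3' : Tendsto (fun hp : ℝ =>
      α * (bp * (hm*(3*α*bm + κ*hm)/(3*α*bp + κ*hp)))
        + κ * (hm*hp*(3*α*bm + κ*hm)/(3*α*bp + κ*hp))/3)
      (𝓝[>] (0:ℝ)) (𝓝 (α*hm*bm + κ*hm^2/3)) := by
    have t1 : Tendsto (fun hp : ℝ => hm*(3*α*bm + κ*hm)/(3*α*bp + κ*hp))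
        (𝓝[>] (0:ℝ)) (𝓝 (hm*(3*α*bm + κ*hm)/(3*α*bp))) :=
      tendsto_const_nhds.div hD hDne
    have tA : Tendsto (fun hp : ℝ => α * (bp * (hm*(3*α*bm + κ*hm)/(3*α*bp + κ*hp))))
        (𝓝[>] (0:ℝ)) (𝓝 (α * (bp * (hm*(3*α*bm + κ*hm)/(3*α*bp))))) :=
      tendsto_const_nhds.mul (tendsto_const_nhds.mul t1)
    have tB : Tendsto (fun hp : ℝ => κ * (hm*hp*(3*α*bm + κ*hm)/(3*α*bp + κ*hp))/3)
        (𝓝[>] (0:ℝ)) (𝓝 (κ * 0 / 3)) :=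
      (tendsto_const_nhds.mul hinner).div tendsto_const_nhds (by norm_num)
    have := tA.add tB
    have hval : α * (bp * (hm*(3*α*bm + κ*hm)/(3*α*bp))) + κ * 0 / 3
        = α*hm*bm + κ*hm^2/3 := by
      field_simp
      ring
    rwa [hval] at this
  exact h3'.congr' heq
end
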